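/- arXiv:1604.06341 — 11 statements merged into one kernel-verified Lean document; each statement's English description precedes it below -/
import Mathlib

section
/- Let E be a real normed space equipped with a partial order making it an ordered vector space, and let E⁺ = {x ∈ E : 0 ≤ x} be its positive cone. Then E⁺ is closed (in the norm topology) if and only if for all x, y ∈ E one has x ≤ y exactly when α(x) ≤ α(y) for every continuous linear functional α : E → ℝ that is nonnegative on E⁺. -/
/-!
The positive cone is convex and stable under nonnegative scalars. When it is closed, Farkas'
lemma (Hahn–Banach for proper cones) separates any `y - x` outside it from the cone by a positive
continuous functional, which then witnesses `x ≰ y`. Conversely, if positive functionals determine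
the order, the cone is the intersection of the closed half-spaces `{α ≥ 0}` over positive `α`.
-/

section

variable {E : Type*} [AddCommGroup E] [PartialOrder E] [Module ℝ E] [TopologicalSpace E]

def ProperCone.positiveOfIsClosed [IsOrderedAddMonoid E] [PosSMulMono ℝ E]
    (h : IsClosed {x : E | 0 ≤ x}) : ProperCone ℝ E where
  toSubmodule := PointedCone.positive ℝ E
  isClosed' := h

theorem le_iff_forall_positive_dual_of_isClosed_nonneg [IsOrderedAddMonoid E] [PosSMulMono ℝ E]
    [IsTopologicalAddGroup E] [ContinuousSMul ℝ E] [LocallyConvexSpace ℝ E]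
    (h : IsClosed {x : E | 0 ≤ x}) {x y : E} :
    x ≤ y ↔ ∀ α : StrongDual ℝ E, (∀ a, 0 ≤ a → 0 ≤ α a) → α x ≤ α y := by
  constructor
  · intro hxy α hα
    simpa using hα (y - x) (sub_nonneg.2 hxy)
  · intro hdual
    by_contra hxy
    obtain ⟨α, hα, hlt⟩ := (ProperCone.positiveOfIsClosed h).hyperplane_separation_point
      (x₀ := y - x) (mt sub_nonneg.1 hxy)
    rw [map_sub, sub_neg] at hlt
    exact (hdual α hα).not_gt hlt

theorem isClosed_nonneg_of_forall_positive_dual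
    (h : ∀ x : E, (∀ α : StrongDual ℝ E, (∀ a, 0 ≤ a → 0 ≤ α a) → 0 ≤ α x) → 0 ≤ x) :
    IsClosed {x : E | 0 ≤ x} := by
  have hcone : {x : E | 0 ≤ x} =
      ⋂ α ∈ {α : StrongDual ℝ E | ∀ a, 0 ≤ a → 0 ≤ α a}, α ⁻¹' Set.Ici 0 := by
    ext x
    simpa using ⟨fun hx α hα => hα x hx, h x⟩
  exact hcone ▸ isClosed_biInter fun α _ => isClosed_Ici.preimage α.continuous

end

/-- A real normed space with a partial order making it an ordered vector space has a
closed positive cone iff the order is determined by the positive continuous linear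
functionals. -/
theorem closed_cone_iff_order_determined_by_positive_dual
    {E : Type*} [NormedAddCommGroup E] [NormedSpace ℝ E] [PartialOrder E]
    [CovariantClass E E (· + ·) (· ≤ ·)]
    (hsmul : ∀ (c : ℝ) (x : E), 0 ≤ c → 0 ≤ x → 0 ≤ c • x) :
    IsClosed {x : E | 0 ≤ x} ↔
      ∀ x y : E, x ≤ y ↔ ∀ α : E →L[ℝ] ℝ, (∀ a : E, 0 ≤ a → 0 ≤ α a) → α x ≤ α y := by
  have : IsOrderedAddMonoid E := { add_le_add_left := fun _ _ h c => add_le_add_left h c }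
  have : PosSMulMono ℝ E := .of_smul_nonneg fun c hc x hx => hsmul c x hc hx
  refine ⟨fun h _ _ => le_iff_forall_positive_dual_of_isClosed_nonneg h, fun h => ?_⟩
  exact isClosed_nonneg_of_forall_positive_dual fun x hx => (h 0 x).2 (by simpa using hx)
end

section
/- (Andô) Let D be a real Banach space equipped with a partial order making it an ordered vector space, such that the positive cone D⁺ = {x ∈ D : 0 ≤ x} is closed and generating (i.e., D = D⁺ − D⁺). Then there exists a constant C > 0 such that for every x ∈ D, C·‖x‖ ≥ inf { ‖a‖ : a ∈ D⁺, −a ≤ x ≤ a }. -/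
/-!
Decompositions `x = y - z` with `0 ≤ y, z` are the preimages of `x` under the bounded linear map
`(y, z) ↦ y - z` lying in the closed cone `D⁺ × D⁺`, so the theorem is an open mapping theorem for
a map that is onto already on a closed cone. Baire's theorem gives approximate preimages in the
cone of norm `O(‖x‖)`; summing the geometric series of approximate preimages of the successive
remainders gives an exact one, which stays in the cone because the cone is closed. Then
`a = y + z` satisfies `-a ≤ x ≤ a` and `‖a‖ ≤ ‖y‖ + ‖z‖`.
-/

open Filter Function Metric Set Topology

namespace ContinuousLinearMap

variable {E F : Type*} [NormedAddCommGroup E] [NormedSpace ℝ E] [NormedAddCommGroup F]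
  [NormedSpace ℝ F] (f : E →L[ℝ] F) (K : PointedCone ℝ E)

theorem exists_closedBall_approx_preimage_mem_cone [CompleteSpace F]
    (hsurj : ∀ y, ∃ x ∈ K, f x = y) :
    ∃ ε > 0, ∃ R, ∀ w : F, ‖w‖ ≤ ε → ∃ x ∈ K, ‖x‖ ≤ R ∧ dist (f x) w ≤ ε / 2 := by
  have hcover : ⋃ n : ℕ, closure (f '' (K ∩ closedBall 0 n)) = univ := by
    refine eq_univ_of_forall fun y => ?_
    obtain ⟨x, hxK, rfl⟩ := hsurj y
    obtain ⟨n, hn⟩ := exists_nat_ge ‖x‖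
    exact mem_iUnion.2 ⟨n, subset_closure ⟨x, ⟨hxK, mem_closedBall_zero_iff.2 hn⟩, rfl⟩⟩
  obtain ⟨n, y₀, hy₀⟩ := nonempty_interior_of_iUnion_of_closed (fun _ => isClosed_closure) hcover
  obtain ⟨ε, hε, hball⟩ := isOpen_iff.1 isOpen_interior y₀ hy₀
  -- The centre `y₀` is moved to `0` by adding a preimage of `-y₀` in the cone.
  obtain ⟨x₀, hx₀K, hx₀⟩ := hsurj (-y₀)
  refine ⟨ε / 2, by positivity, n + ‖x₀‖, fun w hw => ?_⟩
  have hw' : y₀ + w ∈ closure (f '' (K ∩ closedBall 0 n)) := by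
    refine interior_subset (hball ?_)
    rw [mem_ball, dist_eq_norm, add_sub_cancel_left]
    linarith
  obtain ⟨_, ⟨x, ⟨hxK, hxn⟩, rfl⟩, hdist⟩ := mem_closure_iff.1 hw' (ε / 2 / 2) (by positivity)
  refine ⟨x + x₀, K.add_mem hxK hx₀K, ?_, ?_⟩
  · exact (norm_add_le x x₀).trans (by simpa using hxn)
  · have hshift : f (x + x₀) - w = f x - (y₀ + w) := by rw [map_add, hx₀]; abel
    rw [dist_eq_norm, hshift, ← dist_eq_norm, dist_comm]
    exact hdist.le

theorem exists_approx_preimage_mem_cone_norm_le_of_closedBall {ε R : ℝ} (hε : 0 < ε)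
    (h : ∀ w : F, ‖w‖ ≤ ε → ∃ x ∈ K, ‖x‖ ≤ R ∧ dist (f x) w ≤ ε / 2) (y : F) :
    ∃ x ∈ K, dist (f x) y ≤ 1 / 2 * ‖y‖ ∧ ‖x‖ ≤ R / ε * ‖y‖ := by
  rcases eq_or_ne y 0 with rfl | hy
  · exact ⟨0, K.zero_mem, by simp, by simp⟩
  have hy : 0 < ‖y‖ := norm_pos_iff.2 hy
  set c := ‖y‖ / ε with hc
  have hc0 : 0 < c := by positivity
  obtain ⟨x, hxK, hxR, hdist⟩ := h (c⁻¹ • y) (by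
    rw [norm_smul, Real.norm_of_nonneg (inv_nonneg.2 hc0.le), hc, inv_div,
      div_mul_cancel₀ _ hy.ne'])
  refine ⟨c • x, K.smul_mem hc0.le hxK, ?_, ?_⟩
  · calc dist (f (c • x)) y = c * dist (f x) (c⁻¹ • y) := by
          rw [map_smul, ← Real.norm_of_nonneg hc0.le, ← dist_smul₀, Real.norm_of_nonneg hc0.le,
            smul_inv_smul₀ hc0.ne']
      _ ≤ c * (ε / 2) := by gcongr
      _ = 1 / 2 * ‖y‖ := by rw [hc]; field_simp
  · rw [norm_smul, Real.norm_of_nonneg hc0.le, hc]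
    calc ‖y‖ / ε * ‖x‖ ≤ ‖y‖ / ε * R := by gcongr
      _ = R / ε * ‖y‖ := by ring

theorem exists_approx_preimage_mem_cone_norm_le [CompleteSpace F]
    (hsurj : ∀ y, ∃ x ∈ K, f x = y) :
    ∃ C ≥ 0, ∀ y, ∃ x ∈ K, dist (f x) y ≤ 1 / 2 * ‖y‖ ∧ ‖x‖ ≤ C * ‖y‖ := by
  obtain ⟨ε, hε, R, h⟩ := f.exists_closedBall_approx_preimage_mem_cone K hsurj
  have hR : 0 ≤ R := by
    obtain ⟨x, -, hxR, -⟩ := h 0 (by simpa using hε.le)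
    exact (norm_nonneg x).trans hxR
  exact ⟨R / ε, by positivity, f.exists_approx_preimage_mem_cone_norm_le_of_closedBall K hε h⟩

theorem exists_preimage_mem_cone_norm_le [CompleteSpace E] [CompleteSpace F]
    (hK : IsClosed (K : Set E)) (hsurj : ∀ y, ∃ x ∈ K, f x = y) :
    ∃ C > 0, ∀ y, ∃ x ∈ K, f x = y ∧ ‖x‖ ≤ C * ‖y‖ := by
  obtain ⟨C, hC, happrox⟩ := f.exists_approx_preimage_mem_cone_norm_le K hsurj
  choose g hgK hg using happrox
  -- Repeatedly take an approximate preimage of what is left; the remainders halve at each step.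
  let h y := y - f (g y)
  have hnle : ∀ y (n : ℕ), ‖h^[n] y‖ ≤ (1 / 2) ^ n * ‖y‖ := by
    intro y n
    induction n with
    | zero => simp
    | succ n ih =>
      rw [iterate_succ_apply', pow_succ', mul_assoc]
      calc ‖h (h^[n] y)‖ ≤ 1 / 2 * ‖h^[n] y‖ := by rw [← dist_eq_norm, dist_comm]; exact (hg _).1
        _ ≤ 1 / 2 * ((1 / 2) ^ n * ‖y‖) := by gcongr
  refine ⟨2 * C + 1, by positivity, fun y => ?_⟩
  let u n := g (h^[n] y)
  have hu : ∀ n, ‖u n‖ ≤ (1 / 2) ^ n * (C * ‖y‖) := fun n =>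
    calc ‖u n‖ ≤ C * ‖h^[n] y‖ := (hg _).2
      _ ≤ C * ((1 / 2) ^ n * ‖y‖) := by gcongr; exact hnle y n
      _ = (1 / 2) ^ n * (C * ‖y‖) := by ring
  have hgeom : Summable fun n : ℕ => (1 / 2 : ℝ) ^ n * (C * ‖y‖) :=
    summable_geometric_two.mul_right _
  have hsum_norm : Summable fun n => ‖u n‖ := .of_nonneg_of_le (fun _ => norm_nonneg _) hu hgeom
  have hpartial : ∀ n, f (∑ i ∈ Finset.range n, u i) = y - h^[n] y := by
    intro n
    induction n with
    | zero => simp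
    | succ n ih => rw [Finset.sum_range_succ, map_add, ih, iterate_succ_apply', sub_add]
  have hrem : Tendsto (fun n => h^[n] y) atTop (𝓝 0) := by
    refine squeeze_zero_norm (hnle y) ?_
    simpa using (tendsto_pow_atTop_nhds_zero_of_lt_one (by norm_num)
      (by norm_num : (1 / 2 : ℝ) < 1)).mul_const ‖y‖
  have hfx : f (∑' n, u n) = y := by
    refine tendsto_nhds_unique
      ((f.continuous.tendsto _).comp hsum_norm.of_norm.hasSum.tendsto_sum_nat) ?_
    simpa [comp_def, hpartial] using tendsto_const_nhds.sub hrem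
  refine ⟨∑' n, u n, tsum_mem hK fun n => hgK _, hfx, ?_⟩
  calc ‖∑' n, u n‖ ≤ ∑' n, ‖u n‖ := norm_tsum_le_tsum_norm hsum_norm
    _ ≤ ∑' n : ℕ, (1 / 2 : ℝ) ^ n * (C * ‖y‖) := hsum_norm.tsum_le_tsum hu hgeom
    _ = 2 * C * ‖y‖ := by rw [tsum_mul_right, tsum_geometric_two, mul_assoc]
    _ ≤ (2 * C + 1) * ‖y‖ := by nlinarith [norm_nonneg y]

end ContinuousLinearMap

theorem neg_add_le_sub_and_sub_le_add {G : Type*} [AddCommGroup G] [PartialOrder G]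
    [IsOrderedAddMonoid G] {y z : G} (hy : 0 ≤ y) (hz : 0 ≤ z) :
    -(y + z) ≤ y - z ∧ y - z ≤ y + z :=
  ⟨by rw [neg_add']; exact sub_le_sub_right (neg_le_self hy) z,
    (sub_le_self y hz).trans (le_add_of_nonneg_right hz)⟩

/-- Andô's theorem: an ordered Banach space with a closed generating cone has an
absolutely dominating norm. -/
theorem ando_absolutely_dominating
    {D : Type*} [NormedAddCommGroup D] [NormedSpace ℝ D] [CompleteSpace D]
    [PartialOrder D] [CovariantClass D D (· + ·) (· ≤ ·)]
    (hsmul : ∀ (c : ℝ) (x : D), 0 ≤ c → 0 ≤ x → 0 ≤ c • x)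
    (hclosed : IsClosed {x : D | 0 ≤ x})
    (hgen : ∀ x : D, ∃ y z : D, 0 ≤ y ∧ 0 ≤ z ∧ x = y - z) :
    ∃ C : ℝ, 0 < C ∧ ∀ x : D,
      sInf {r : ℝ | ∃ a : D, 0 ≤ a ∧ -a ≤ x ∧ x ≤ a ∧ r = ‖a‖} ≤ C * ‖x‖ := by
  have : IsOrderedAddMonoid D :=
    ⟨fun a b h c => by simpa only [add_comm _ c] using add_le_add_right h c,
      fun _ _ h c => add_le_add_right h c⟩
  have : PosSMulMono ℝ D := .of_smul_nonneg fun c hc x hx => hsmul c x hc hx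
  let P := PointedCone.positive ℝ D
  obtain ⟨C, hC, hdecomp⟩ :=
    (ContinuousLinearMap.fst ℝ D D - ContinuousLinearMap.snd ℝ D D).exists_preimage_mem_cone_norm_le
      (P.prod P) (by rw [Submodule.prod_coe]; exact hclosed.prod hclosed)
      (fun x => by
        obtain ⟨y, z, hy, hz, rfl⟩ := hgen x
        exact ⟨(y, z), ⟨hy, hz⟩, rfl⟩)
  refine ⟨2 * C, by positivity, fun x => ?_⟩
  obtain ⟨⟨y, z⟩, ⟨hy, hz⟩, hx, hyz⟩ := hdecomp x
  obtain rfl : y - z = x := hx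
  have hbdd : BddBelow {r : ℝ | ∃ a : D, 0 ≤ a ∧ -a ≤ y - z ∧ y - z ≤ a ∧ r = ‖a‖} :=
    ⟨0, by rintro r ⟨a, -, -, -, rfl⟩; exact norm_nonneg a⟩
  obtain ⟨hlower, hupper⟩ := neg_add_le_sub_and_sub_le_add hy hz
  calc sInf {r : ℝ | ∃ a : D, 0 ≤ a ∧ -a ≤ y - z ∧ y - z ≤ a ∧ r = ‖a‖}
      ≤ ‖y + z‖ := csInf_le hbdd ⟨y + z, add_nonneg hy hz, hlower, hupper, rfl⟩
    _ ≤ ‖y‖ + ‖z‖ := norm_add_le y z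
    _ ≤ 2 * C * ‖y - z‖ := by linarith [norm_fst_le (y, z), norm_snd_le (y, z)]
end

section
/- Let D be a real Banach space equipped with a partial order making it an ordered vector space, and suppose the positive cone D⁺ = {x ∈ D : 0 ≤ x} is closed. If a₁, a₂, … ∈ D⁺ satisfy ∑ₙ ‖aₙ‖ < ∞, then there exist a ∈ D⁺ and reals εₙ > 0 with εₙ → 0 such that aₙ ≤ εₙ·a for all n. -/
/-!
Let `tₙ = ∑_{k ≥ n} ‖aₖ‖` be the tails of the norm series and `εₙ = √(tₙ + 2⁻ⁿ)`. Since
`(x - y) / √x ≤ 2 (√x - √y)` for `0 ≤ y ≤ x`, the series `∑ ‖aₙ‖ / εₙ` is dominated by a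
telescoping series, so `b = ∑ εₙ⁻¹ aₙ` converges in the Banach space `D`. Because the cone
is closed, the order is closed, so each term `εₙ⁻¹ aₙ` of this series of positive elements
lies below its sum `b`; multiplying by `εₙ` gives `aₙ ≤ εₙ b`.
-/

open Filter Topology

theorem sub_div_sqrt_le_two_mul_sqrt_sub {x y : ℝ} (hy : 0 ≤ y) (hyx : y ≤ x) :
    (x - y) / √x ≤ 2 * (√x - √y) := by
  rcases hy.trans hyx |>.eq_or_lt with rfl | hx
  · obtain rfl := le_antisymm hyx hy
    simp
  have hsqrt : √y ≤ √x := Real.sqrt_le_sqrt hyx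
  rw [div_le_iff₀ (Real.sqrt_pos.2 hx)]
  calc x - y = (√x - √y) * (√x + √y) := by
        linear_combination -Real.sq_sqrt hx.le + Real.sq_sqrt hy
    _ ≤ (√x - √y) * (2 * √x) := by gcongr; linarith
    _ = 2 * (√x - √y) * √x := by ring

theorem summable_div_sqrt_of_le_sub {c s : ℕ → ℝ} (hc : ∀ n, 0 ≤ c n) (hs : ∀ n, 0 ≤ s n)
    (hcs : ∀ n, c n ≤ s n - s (n + 1)) : Summable fun n => c n / √(s n) := by
  have hanti : ∀ n, √(s (n + 1)) ≤ √(s n) := fun n =>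
    Real.sqrt_le_sqrt (by linarith [hc n, hcs n])
  have htele : Summable fun n => 2 * (√(s n) - √(s (n + 1))) := by
    refine summable_of_sum_range_le (c := 2 * √(s 0)) (fun n => by linarith [hanti n]) fun n => ?_
    rw [← Finset.mul_sum, Finset.sum_range_sub']
    linarith [Real.sqrt_nonneg (s n)]
  refine htele.of_nonneg_of_le (fun n => div_nonneg (hc n) (Real.sqrt_nonneg _)) fun n => ?_
  calc c n / √(s n) ≤ (s n - s (n + 1)) / √(s n) := by gcongr; exact hcs n
    _ ≤ 2 * (√(s n) - √(s (n + 1))) :=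
      sub_div_sqrt_le_two_mul_sqrt_sub (hs _) (by linarith [hc n, hcs n])

theorem exists_tendsto_zero_summable_div {c : ℕ → ℝ} (hc : ∀ n, 0 ≤ c n) (hsum : Summable c) :
    ∃ ε : ℕ → ℝ, (∀ n, 0 < ε n) ∧ Tendsto ε atTop (𝓝 0) ∧ Summable fun n => c n / ε n := by
  set t : ℕ → ℝ := fun n => ∑' k, c (k + n)
  have ht_succ : ∀ n, t n = c n + t (n + 1) := fun n => by
    simpa [t, add_assoc, add_comm 1 n] using ((summable_nat_add_iff n).2 hsum).tsum_eq_zero_add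
  have hs_pos : ∀ n, 0 < t n + 2⁻¹ ^ n := fun n => by
    have : 0 ≤ t n := tsum_nonneg fun k => hc _
    positivity
  have hs_tendsto : Tendsto (fun n => t n + 2⁻¹ ^ n) atTop (𝓝 0) := by
    simpa using (tendsto_sum_nat_add c).add
      (tendsto_pow_atTop_nhds_zero_of_lt_one (by norm_num : (0 : ℝ) ≤ 2⁻¹) (by norm_num))
  refine ⟨fun n => √(t n + 2⁻¹ ^ n), fun n => Real.sqrt_pos.2 (hs_pos n), ?_,
    summable_div_sqrt_of_le_sub hc (fun n => (hs_pos n).le) fun n => ?_⟩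
  · simpa [Function.comp_def] using (Real.continuous_sqrt.tendsto 0).comp hs_tendsto
  · rw [ht_succ n, pow_succ]
    linarith [pow_pos (by norm_num : (0 : ℝ) < 2⁻¹) n]

theorem OrderClosedTopology.of_isClosed_nonneg {E : Type*} [AddCommGroup E] [TopologicalSpace E]
    [IsTopologicalAddGroup E] [PartialOrder E] [IsOrderedAddMonoid E]
    (h : IsClosed {x : E | 0 ≤ x}) : OrderClosedTopology E where
  isClosed_le' := by
    simpa [sub_nonneg] using h.preimage (f := fun p : E × E => p.2 - p.1) (by fun_prop)

/-- In an ordered Banach space with closed cone, every norm-summable sequence of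
positive elements is uniformly dominated: `aₙ ≤ εₙ • a` with `εₙ → 0`. -/
theorem summable_pos_seq_uniformly_dominated
    {D : Type*} [NormedAddCommGroup D] [NormedSpace ℝ D] [CompleteSpace D]
    [PartialOrder D] [CovariantClass D D (· + ·) (· ≤ ·)]
    (hsmul : ∀ (c : ℝ) (x : D), 0 ≤ c → 0 ≤ x → 0 ≤ c • x)
    (hclosed : IsClosed {x : D | 0 ≤ x})
    (a : ℕ → D) (ha : ∀ n, 0 ≤ a n) (hsum : Summable fun n => ‖a n‖) :
    ∃ b : D, 0 ≤ b ∧ ∃ ε : ℕ → ℝ, (∀ n, 0 < ε n) ∧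
      Tendsto ε atTop (nhds 0) ∧ ∀ n, a n ≤ ε n • b := by
  have : IsOrderedAddMonoid D := { add_le_add_left := fun _ _ h c => add_le_add_left h c }
  have := OrderClosedTopology.of_isClosed_nonneg hclosed
  have := PosSMulMono.of_smul_nonneg fun c hc x hx => hsmul c x hc hx
  obtain ⟨ε, hε_pos, hε_tendsto, hε_summable⟩ :=
    exists_tendsto_zero_summable_div (fun n => norm_nonneg (a n)) hsum
  set S : ℕ → D := fun n => (ε n)⁻¹ • a n
  have hS_nonneg : ∀ n, 0 ≤ S n := fun n => hsmul _ _ (inv_nonneg.2 (hε_pos n).le) (ha n)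
  have hS_summable : Summable S := Summable.of_norm <| hε_summable.congr fun n => by
    simp [S, norm_smul, abs_of_pos (hε_pos n), div_eq_inv_mul]
  refine ⟨∑' n, S n, tsum_nonneg hS_nonneg, ε, hε_pos, hε_tendsto, fun n => ?_⟩
  calc a n = ε n • S n := by simp [S, smul_smul, (hε_pos n).ne']
    _ ≤ ε n • ∑' n, S n := by
      gcongr
      exacts [(hε_pos n).le, hS_summable.le_tsum n fun j _ => hS_nonneg j]
end

section
/- Let D₁ and D₂ be real Banach spaces, each equipped with a partial order making it an ordered vector space. Suppose the positive cone D₁⁺ = {x ∈ D₁ : 0 ≤ x} is closed and generating (D₁ = D₁⁺ − D₁⁺), and the positive cone D₂⁺ is closed. Let T : D₁ → D₂ be a linear map that is order bounded (T maps every order interval [u, v] = {x : u ≤ x ≤ v} into some order interval of D₂). Then T is continuous. -/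
/-!
A closed generating cone in a Banach space is norm-generating (Andô): there is `M` such that
every `x` is `y - z` with `0 ≤ y, z` and `‖y‖, ‖z‖ ≤ M ‖x‖. Baire's theorem puts a ball around
`0` in the closure of the differences of positive elements of norm at most `N`, and the
iteration from the proof of the open mapping theorem removes the closure, the limits staying
positive because the cone is closed.

By the closed graph theorem it suffices that `x_k → 0` and `T x_k → v` force `v = 0`. Along a
subsequence with `‖x_k‖ < 4⁻ᵏ`, write `x_k = y_k - z_k` as above. Then `u = ∑ 2ᵏ y_k` converges
to a positive vector dominating every `2ᵏ y_k`, so order boundedness of `T` on `[0, u]` gives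
`T y_k ∈ [2⁻ᵏ p, 2⁻ᵏ q]`, and similarly for `z_k`. Thus `T x_k` is squeezed between `2⁻ᵏ`
multiples of two fixed vectors, and as the cone of `D₂` is closed, `v = 0`.
-/

open Set Metric Filter Topology
open scoped Pointwise

lemma orderClosedTopology_of_isClosed_nonneg {G : Type*} [AddGroup G] [PartialOrder G]
    [AddRightMono G] [TopologicalSpace G] [ContinuousSub G] (h : IsClosed {x : G | 0 ≤ x}) :
    OrderClosedTopology G where
  isClosed_le' := by
    simpa only [preimage_ofPred_eq, Pi.sub_apply, sub_nonneg] using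
      h.preimage (continuous_snd.sub continuous_fst)

section NonnegBall

variable {E : Type*} [NormedAddCommGroup E] [PartialOrder E]

variable (E) in
def nonnegBall (N : ℝ) : Set E := Ici 0 ∩ closedBall 0 N

lemma zero_mem_nonnegBall_sub {N : ℝ} (hN : 0 ≤ N) : (0 : E) ∈ nonnegBall E N - nonnegBall E N :=
  ⟨0, ⟨le_rfl, by simpa using hN⟩, 0, ⟨le_rfl, by simpa using hN⟩, sub_zero 0⟩

lemma neg_mem_nonnegBall_sub {N : ℝ} {x : E} (hx : x ∈ nonnegBall E N - nonnegBall E N) :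
    -x ∈ nonnegBall E N - nonnegBall E N := by
  obtain ⟨y, hy, z, hz, rfl⟩ := hx
  exact ⟨z, hz, y, hy, (neg_sub y z).symm⟩

lemma mem_nonnegBall_sub_of_approx [IsOrderedAddMonoid E] [OrderClosedTopology E]
    [CompleteSpace E] {M : ℝ} (hM : 0 ≤ M)
    (happrox : ∀ x : E, ∃ a ∈ nonnegBall E (M * ‖x‖) - nonnegBall E (M * ‖x‖), ‖x - a‖ ≤ ‖x‖ / 2)
    (x : E) : x ∈ nonnegBall E (2 * M * ‖x‖) - nonnegBall E (2 * M * ‖x‖) := by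
  choose a ha hxa using happrox
  choose y hy z hz hyz using ha
  beta_reduce at hyz
  -- The residuals `r k` at least halve at each step, and the corrections `a (r k)` telescope.
  set r : ℕ → E := fun k => (fun w => w - a w)^[k] x
  have hr_succ (k : ℕ) : r (k + 1) = r k - a (r k) := Function.iterate_succ_apply' _ _ _
  have hr_norm (k : ℕ) : ‖r k‖ ≤ ‖x‖ * (1 / 2) ^ k := by
    induction k with
    | zero => simp [r]
    | succ k ih => rw [hr_succ, pow_succ]; linarith [hxa (r k)]
  have hg : HasSum (fun k : ℕ => M * ‖x‖ * (1 / 2) ^ k) (M * ‖x‖ * 2) :=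
    hasSum_geometric_two.mul_left _
  have hbound {s : E → E} (hs : ∀ w, s w ∈ nonnegBall E (M * ‖w‖)) (k : ℕ) :
      ‖s (r k)‖ ≤ M * ‖x‖ * (1 / 2) ^ k := by
    rw [mul_assoc]
    exact (mem_closedBall_zero_iff.mp (hs _).2).trans (mul_le_mul_of_nonneg_left (hr_norm k) hM)
  have hY := Summable.of_norm_bounded hg.summable (hbound hy)
  have hZ := Summable.of_norm_bounded hg.summable (hbound hz)
  have htel : HasSum (fun k => y (r k) - z (r k)) x := by
    refine (hY.sub hZ).hasSum_iff_tendsto_nat.mpr ?_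
    have hr0 : Tendsto r atTop (𝓝 0) :=
      squeeze_zero_norm hr_norm (by simpa using (tendsto_pow_atTop_nhds_zero_of_lt_one
        (by norm_num : (0 : ℝ) ≤ 1 / 2) (by norm_num)).const_mul ‖x‖)
    have hdiff (k : ℕ) : y (r k) - z (r k) = r k - r (k + 1) := by
      rw [hyz, hr_succ, sub_sub_cancel]
    simp only [hdiff, Finset.sum_range_sub']
    simpa [r] using hr0.const_sub x
  refine ⟨∑' k, y (r k), ⟨tsum_nonneg fun k => (hy _).1, ?_⟩,
    ∑' k, z (r k), ⟨tsum_nonneg fun k => (hz _).1, ?_⟩, ?_⟩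
  · exact mem_closedBall_zero_iff.mpr ((tsum_of_norm_bounded hg (hbound hy)).trans_eq (by ring))
  · exact mem_closedBall_zero_iff.mpr ((tsum_of_norm_bounded hg (hbound hz)).trans_eq (by ring))
  · exact (hY.tsum_sub hZ).symm.trans htel.tsum_eq

variable [NormedSpace ℝ E] [PosSMulMono ℝ E]

lemma smul_mem_nonnegBall {N c : ℝ} (hc : 0 ≤ c) {y : E} (hy : y ∈ nonnegBall E N) :
    c • y ∈ nonnegBall E (c * N) := by
  refine ⟨smul_nonneg hc hy.1, ?_⟩
  rw [mem_closedBall_zero_iff, norm_smul, Real.norm_of_nonneg hc]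
  exact mul_le_mul_of_nonneg_left (mem_closedBall_zero_iff.mp hy.2) hc

lemma smul_mem_nonnegBall_sub {N c : ℝ} (hc : 0 ≤ c) {x : E}
    (hx : x ∈ nonnegBall E N - nonnegBall E N) :
    c • x ∈ nonnegBall E (c * N) - nonnegBall E (c * N) := by
  obtain ⟨y, hy, z, hz, rfl⟩ := hx
  exact ⟨c • y, smul_mem_nonnegBall hc hy, c • z, smul_mem_nonnegBall hc hz, (smul_sub c y z).symm⟩

variable [IsOrderedAddMonoid E]

lemma convex_nonnegBall_sub (N : ℝ) : Convex ℝ (nonnegBall E N - nonnegBall E N : Set E) :=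
  have h : Convex ℝ (nonnegBall E N : Set E) := (convex_Ici 0).inter (convex_closedBall 0 N)
  h.sub h

lemma exists_ball_subset_closure_nonnegBall_sub [CompleteSpace E]
    (hgen : ∀ x : E, ∃ y z, 0 ≤ y ∧ 0 ≤ z ∧ x = y - z) :
    ∃ N r : ℝ, 0 ≤ N ∧ 0 < r ∧ ball (0 : E) r ⊆ closure (nonnegBall E N - nonnegBall E N) := by
  have hcover : ⋃ n : ℕ, closure (nonnegBall E (n : ℝ) - nonnegBall E n : Set E) = univ := by
    refine eq_univ_of_forall fun x => ?_
    obtain ⟨y, z, hy, hz, rfl⟩ := hgen x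
    obtain ⟨n, hn⟩ := exists_nat_ge (max ‖y‖ ‖z‖)
    refine mem_iUnion.mpr ⟨n, subset_closure ⟨y, ⟨hy, ?_⟩, z, ⟨hz, ?_⟩, rfl⟩⟩ <;>
      rw [mem_closedBall_zero_iff] <;> [exact (le_max_left _ _).trans hn;
        exact (le_max_right _ _).trans hn]
  obtain ⟨n, a, ha⟩ := nonempty_interior_of_iUnion_of_closed (fun _ => isClosed_closure) hcover
  have hneg : -a ∈ closure (nonnegBall E (n : ℝ) - nonnegBall E n) :=
    map_mem_closure continuous_neg (interior_subset ha) fun _ => neg_mem_nonnegBall_sub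
  -- `0` is the midpoint of the interior point `a` and of `-a`.
  have h0 : (0 : E) ∈ interior (closure (nonnegBall E (n : ℝ) - nonnegBall E n)) := by
    simpa using (convex_nonnegBall_sub (n : ℝ)).closure.combo_interior_self_mem_interior ha hneg
      (half_pos one_pos) (half_pos one_pos).le (add_halves 1)
  obtain ⟨r, hr, hball⟩ := Metric.isOpen_iff.mp isOpen_interior 0 h0
  exact ⟨n, r, n.cast_nonneg, hr, hball.trans interior_subset⟩

lemma exists_nonnegBall_sub_approx [CompleteSpace E]
    (hgen : ∀ x : E, ∃ y z, 0 ≤ y ∧ 0 ≤ z ∧ x = y - z) :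
    ∃ M : ℝ, 0 ≤ M ∧ ∀ x : E,
      ∃ a ∈ nonnegBall E (M * ‖x‖) - nonnegBall E (M * ‖x‖), ‖x - a‖ ≤ ‖x‖ / 2 := by
  obtain ⟨N, r, hN, hr, hball⟩ := exists_ball_subset_closure_nonnegBall_sub hgen
  refine ⟨2 * N / r, by positivity, fun x => ?_⟩
  rcases eq_or_ne x 0 with rfl | hx
  · exact ⟨0, by simpa using zero_mem_nonnegBall_sub (E := E) le_rfl, by simp⟩
  -- Rescale `x` to norm `r / 2`, approximate within `r / 4`, and scale back.
  set c : ℝ := 2 * ‖x‖ / r with hc_def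
  have hc : 0 < c := by positivity
  have hx' : c⁻¹ • x ∈ ball (0 : E) r := by
    rw [mem_ball_zero_iff, norm_smul, Real.norm_of_nonneg (inv_nonneg.mpr hc.le)]
    have : c⁻¹ * ‖x‖ = r / 2 := by rw [hc_def]; field_simp
    linarith
  obtain ⟨a, ha, hxa⟩ := Metric.mem_closure_iff.mp (hball hx') (r / 4) (by positivity)
  refine ⟨c • a, ?_, ?_⟩
  · have hcN : c * N = 2 * N / r * ‖x‖ := by rw [hc_def]; ring
    simpa only [hcN] using smul_mem_nonnegBall_sub hc.le ha
  · calc ‖x - c • a‖ = c * ‖c⁻¹ • x - a‖ := by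
          rw [← norm_smul_of_nonneg hc.le, smul_sub, smul_inv_smul₀ hc.ne']
      _ ≤ c * (r / 4) := by gcongr; rw [← dist_eq_norm]; exact hxa.le
      _ = ‖x‖ / 2 := by rw [hc_def]; field_simp; ring

theorem exists_forall_mem_nonnegBall_sub [OrderClosedTopology E] [CompleteSpace E]
    (hgen : ∀ x : E, ∃ y z, 0 ≤ y ∧ 0 ≤ z ∧ x = y - z) :
    ∃ M : ℝ, 0 ≤ M ∧ ∀ x : E, x ∈ nonnegBall E (M * ‖x‖) - nonnegBall E (M * ‖x‖) := by
  obtain ⟨M, hM, happrox⟩ := exists_nonnegBall_sub_approx hgen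
  exact ⟨2 * M, by positivity, mem_nonnegBall_sub_of_approx hM happrox⟩

end NonnegBall

lemma eq_zero_of_tendsto_of_mem_Icc_smul {ι F : Type*} [AddCommGroup F] [Module ℝ F]
    [TopologicalSpace F] [ContinuousSMul ℝ F] [PartialOrder F] [OrderClosedTopology F]
    {l : Filter ι} [l.NeBot] {u : ι → F} {c : ι → ℝ} {v a b : F} (hu : Tendsto u l (𝓝 v))
    (hc : Tendsto c l (𝓝 0)) (hab : ∀ i, u i ∈ Icc (c i • a) (c i • b)) : v = 0 := by
  have hlim (d : F) : Tendsto (fun i => c i • d) l (𝓝 0) := by simpa using hc.smul_const d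
  exact le_antisymm (le_of_tendsto_of_tendsto' hu (hlim b) fun i => (hab i).2)
    (le_of_tendsto_of_tendsto' (hlim a) hu fun i => (hab i).1)

section OrderBounded

variable {E F : Type*} [NormedAddCommGroup E] [NormedSpace ℝ E] [PartialOrder E]
  [IsOrderedAddMonoid E] [PosSMulMono ℝ E] [OrderClosedTopology E]
  [AddCommGroup F] [Module ℝ F] [PartialOrder F] [PosSMulMono ℝ F]
  (T : E →ₗ[ℝ] F)

lemma LinearMap.exists_mem_Icc_inv_smul_of_summable
    (hob : ∀ u v : E, ∃ p q : F, ∀ x ∈ Icc u v, T x ∈ Icc p q) {s : ℕ → E} (hs : ∀ k, 0 ≤ s k)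
    {c : ℕ → ℝ} (hc : ∀ k, 0 < c k) (hsum : Summable fun k => c k • s k) :
    ∃ p q : F, ∀ k, T (s k) ∈ Icc ((c k)⁻¹ • p) ((c k)⁻¹ • q) := by
  have hnonneg (k : ℕ) : 0 ≤ c k • s k := smul_nonneg (hc k).le (hs k)
  obtain ⟨p, q, hpq⟩ := hob 0 (∑' k, c k • s k)
  refine ⟨p, q, fun k => ?_⟩
  obtain ⟨hp, hq⟩ := hpq _ ⟨hnonneg k, hsum.le_tsum k fun j _ => hnonneg j⟩
  rw [show T (s k) = (c k)⁻¹ • T (c k • s k) by rw [map_smul, inv_smul_smul₀ (hc k).ne']]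
  have hc' : 0 ≤ (c k)⁻¹ := inv_nonneg.mpr (hc k).le
  exact ⟨smul_le_smul_of_nonneg_left hp hc', smul_le_smul_of_nonneg_left hq hc'⟩

lemma LinearMap.eq_zero_of_tendsto_of_orderBounded [CompleteSpace E] [IsOrderedAddMonoid F]
    [TopologicalSpace F] [ContinuousSMul ℝ F] [OrderClosedTopology F]
    (hob : ∀ u v : E, ∃ p q : F, ∀ x ∈ Icc u v, T x ∈ Icc p q)
    {M : ℝ} (hM0 : 0 ≤ M) (hM : ∀ x : E, x ∈ nonnegBall E (M * ‖x‖) - nonnegBall E (M * ‖x‖))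
    {w : ℕ → E} {v : F} (hw : Tendsto w atTop (𝓝 0))
    (hTw : Tendsto (fun k => T (w k)) atTop (𝓝 v)) : v = 0 := by
  -- Along a subsequence with `‖w (φ k)‖ < 4⁻ᵏ`, the positive parts are `O(4⁻ᵏ)`.
  obtain ⟨φ, hφ, hφw⟩ := extraction_forall_of_eventually fun k : ℕ =>
    NormedAddGroup.tendsto_nhds_zero.mp hw ((1 / 4 : ℝ) ^ k) (by positivity)
  choose y hy z hz hyz using fun k => hM (w (φ k))
  have hsum {s : ℕ → E} (hs : ∀ k, s k ∈ nonnegBall E (M * ‖w (φ k)‖)) :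
      Summable fun k => (2 : ℝ) ^ k • s k := by
    refine Summable.of_norm_bounded (summable_geometric_two.mul_left M) fun k => ?_
    calc ‖(2 : ℝ) ^ k • s k‖ = 2 ^ k * ‖s k‖ := by rw [norm_smul, norm_pow, Real.norm_two]
      _ ≤ 2 ^ k * (M * (1 / 4) ^ k) := by
          gcongr
          exact (mem_closedBall_zero_iff.mp (hs k).2).trans (by gcongr; exact (hφw k).le)
      _ = M * (1 / 2) ^ k := by rw [mul_left_comm, ← mul_pow]; norm_num
  obtain ⟨p₁, q₁, h₁⟩ := T.exists_mem_Icc_inv_smul_of_summable hob (fun k => (hy k).1)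
    (fun k => by positivity) (hsum hy)
  obtain ⟨p₂, q₂, h₂⟩ := T.exists_mem_Icc_inv_smul_of_summable hob (fun k => (hz k).1)
    (fun k => by positivity) (hsum hz)
  refine eq_zero_of_tendsto_of_mem_Icc_smul (a := p₁ - q₂) (b := q₁ - p₂)
    (hTw.comp hφ.tendsto_atTop) (tendsto_inv_atTop_zero.comp
      (tendsto_pow_atTop_atTop_of_one_lt one_lt_two)) fun k => ?_
  rw [Function.comp_apply, Function.comp_apply, ← hyz k, map_sub, smul_sub, smul_sub]
  exact ⟨sub_le_sub (h₁ k).1 (h₂ k).2, sub_le_sub (h₁ k).2 (h₂ k).1⟩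

end OrderBounded

/-- An order bounded linear map from an ordered Banach space with closed generating cone
to an ordered Banach space with closed cone is continuous. -/
theorem orderBounded_linear_continuous
    {D₁ D₂ : Type*}
    [NormedAddCommGroup D₁] [NormedSpace ℝ D₁] [CompleteSpace D₁]
    [PartialOrder D₁] [CovariantClass D₁ D₁ (· + ·) (· ≤ ·)]
    [NormedAddCommGroup D₂] [NormedSpace ℝ D₂] [CompleteSpace D₂]
    [PartialOrder D₂] [CovariantClass D₂ D₂ (· + ·) (· ≤ ·)]
    (hsmul₁ : ∀ (c : ℝ) (x : D₁), 0 ≤ c → 0 ≤ x → 0 ≤ c • x)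
    (hsmul₂ : ∀ (c : ℝ) (x : D₂), 0 ≤ c → 0 ≤ x → 0 ≤ c • x)
    (hclosed₁ : IsClosed {x : D₁ | 0 ≤ x})
    (hgen₁ : ∀ x : D₁, ∃ y z : D₁, 0 ≤ y ∧ 0 ≤ z ∧ x = y - z)
    (hclosed₂ : IsClosed {x : D₂ | 0 ≤ x})
    (T : D₁ →ₗ[ℝ] D₂)
    (hob : ∀ u v : D₁, ∃ p q : D₂, ∀ x ∈ Set.Icc u v, T x ∈ Set.Icc p q) :
    Continuous T := by
  have : IsOrderedAddMonoid D₁ :=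
    ⟨fun _ _ h _ => add_le_add h le_rfl, fun _ _ h _ => add_le_add le_rfl h⟩
  have : IsOrderedAddMonoid D₂ :=
    ⟨fun _ _ h _ => add_le_add h le_rfl, fun _ _ h _ => add_le_add le_rfl h⟩
  have : PosSMulMono ℝ D₁ := .of_smul_nonneg fun c hc x hx => hsmul₁ c x hc hx
  have : PosSMulMono ℝ D₂ := .of_smul_nonneg fun c hc x hx => hsmul₂ c x hc hx
  have : OrderClosedTopology D₁ := orderClosedTopology_of_isClosed_nonneg hclosed₁
  have : OrderClosedTopology D₂ := orderClosedTopology_of_isClosed_nonneg hclosed₂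
  obtain ⟨M, hM0, hM⟩ := exists_forall_mem_nonnegBall_sub hgen₁
  refine T.continuous_of_seq_closed_graph fun u x y hux hTu => ?_
  have hTux : Tendsto (fun k => T (u k - x)) atTop (𝓝 (y - T x)) := by
    simpa only [map_sub, Function.comp_apply] using hTu.sub_const (T x)
  exact sub_eq_zero.mp (T.eq_zero_of_tendsto_of_orderBounded hob hM0 hM
    (by simpa using hux.sub_const x) hTux)
end

section
/- Let (X, 𝒜, μ) be a complete σ-finite measure space. Let D be a real Banach space equipped with a partial order making it an ordered vector space with closed generating positive cone D⁺, and let C > 0 be such that the norm is C-absolutely dominating: C·‖x‖ ≥ inf { ‖a‖ : a ∈ D⁺, −a ≤ x ≤ a } for all x ∈ D. Then for every Bochner integrable f : X → D and every ε > 0 there exists a Bochner integrable g : X → D⁺ with −g ≤ f ≤ g μ-almost everywhere and ∫ ‖g‖ dμ ≤ C · (∫ ‖f‖ dμ + ε). -/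
/-!
Approximate `f` in `L¹` by simple functions `Sₙ` with summable errors. With `S₀ = 0`, the
differences `dₙ = Sₙ₊₁ - Sₙ` are simple functions summing to `f` almost everywhere, and
`∑ ‖dₙ‖₁ ≤ ‖f‖₁ + ε`. By absolute domination every value `v` of every `dₙ` lies between `-a` and
`a` for some positive `a` with `‖a‖ ≤ C' ‖v‖`, where `C'` is slightly larger than `C`. These
choices turn `dₙ` into positive simple functions `gₙ` with `‖gₙ‖₁ ≤ C' ‖dₙ‖₁`, so `g = ∑ gₙ`
converges absolutely in `L¹`. Because the cone is closed, `g` is positive and the termwise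
inequalities `-gₙ ≤ dₙ ≤ gₙ` survive summation.
-/

open MeasureTheory Filter
open scoped ENNReal

lemma hasSum_sub_of_summable_norm_sub {E : Type*} [NormedAddCommGroup E] [CompleteSpace E]
    {t : ℕ → E} {v : E} (ht0 : t 0 = 0) (ht : Summable fun n => ‖v - t n‖) :
    HasSum (fun n => t (n + 1) - t n) v := by
  have hdiff : Summable fun n => ‖t (n + 1) - t n‖ := by
    refine .of_nonneg_of_le (fun _ => norm_nonneg _) (fun n => ?_)
      (((summable_nat_add_iff 1).2 ht).add ht)
    rw [← sub_sub_sub_cancel_left (t n) (t (n + 1)) v]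
    exact (norm_sub_le _ _).trans_eq (add_comm _ _)
  rw [hasSum_iff_tendsto_nat_of_summable_norm hdiff]
  simp only [Finset.sum_range_sub, ht0, sub_zero]
  rw [tendsto_iff_norm_sub_tendsto_zero]
  simpa only [norm_sub_rev] using ht.tendsto_atTop_zero

namespace MeasureTheory

variable {X E : Type*} [MeasurableSpace X] {μ : Measure X} [NormedAddCommGroup E]

lemma ae_summable_norm_of_tsum_lintegral_enorm_ne_top {F : ℕ → X → E}
    (hF : ∀ n, AEStronglyMeasurable (F n) μ) (h : ∑' n, ∫⁻ x, ‖F n x‖ₑ ∂μ ≠ ∞) :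
    ∀ᵐ x ∂μ, Summable fun n => ‖F n x‖ := by
  have hmeas : ∀ n, AEMeasurable (fun x => ‖F n x‖ₑ) μ := fun n => (hF n).enorm
  rw [← lintegral_tsum hmeas] at h
  filter_upwards [ae_lt_top' (AEMeasurable.tsum hmeas) h] with x hx
  exact ENNReal.tsum_coe_ne_top_iff_summable_coe.1 hx.ne

lemma lintegral_enorm_tsum_le {F : ℕ → X → E} (hF : ∀ n, AEStronglyMeasurable (F n) μ) :
    ∫⁻ x, ‖∑' n, F n x‖ₑ ∂μ ≤ ∑' n, ∫⁻ x, ‖F n x‖ₑ ∂μ :=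
  (lintegral_mono fun _ => enorm_tsum_le_tsum_enorm).trans_eq
    (lintegral_tsum fun n => (hF n).enorm)

lemma integrable_tsum_of_tsum_lintegral_enorm_ne_top [CompleteSpace E] {F : ℕ → X → E}
    (hF : ∀ n, AEStronglyMeasurable (F n) μ) (h : ∑' n, ∫⁻ x, ‖F n x‖ₑ ∂μ ≠ ∞) :
    Integrable (fun x => ∑' n, F n x) μ := by
  refine ⟨aestronglyMeasurable_of_tendsto_ae atTop
    (fun N => Finset.aestronglyMeasurable_fun_sum (Finset.range N) fun n _ => hF n) ?_,
    (lintegral_enorm_tsum_le hF).trans_lt h.lt_top⟩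
  filter_upwards [ae_summable_norm_of_tsum_lintegral_enorm_ne_top hF h] with x hx
  exact hx.of_norm.hasSum.tendsto_sum_nat

lemma ae_hasSum_sub_of_tsum_lintegral_enorm_sub_ne_top [CompleteSpace E] {f : X → E}
    {T : ℕ → X → E} (hf : AEStronglyMeasurable f μ) (hT : ∀ n, AEStronglyMeasurable (T n) μ)
    (hT0 : T 0 = 0) (h : ∑' n, ∫⁻ x, ‖f x - T n x‖ₑ ∂μ ≠ ∞) :
    ∀ᵐ x ∂μ, HasSum (fun n => T (n + 1) x - T n x) (f x) := by
  filter_upwards [ae_summable_norm_of_tsum_lintegral_enorm_ne_top (fun n => hf.sub (hT n)) h]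
    with x hx
  exact hasSum_sub_of_summable_norm_sub (congrFun hT0 x) hx

lemma tsum_lintegral_enorm_sub_le {f : X → E} {T : ℕ → X → E}
    (hf : AEStronglyMeasurable f μ) (hT : ∀ n, AEStronglyMeasurable (T n) μ) (hT0 : T 0 = 0) :
    ∑' n, ∫⁻ x, ‖T (n + 1) x - T n x‖ₑ ∂μ ≤
      ∫⁻ x, ‖f x‖ₑ ∂μ + 2 * ∑' n, ∫⁻ x, ‖f x - T (n + 1) x‖ₑ ∂μ := by
  set e : ℕ → ℝ≥0∞ := fun n => ∫⁻ x, ‖f x - T n x‖ₑ ∂μ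
  have he0 : e 0 = ∫⁻ x, ‖f x‖ₑ ∂μ := by simp [e, hT0]
  have hstep : ∀ n, ∫⁻ x, ‖T (n + 1) x - T n x‖ₑ ∂μ ≤ e (n + 1) + e n := fun n => by
    refine (lintegral_mono fun x => ?_).trans_eq
      (lintegral_add_left' (hf.sub (hT (n + 1))).enorm _)
    rw [← sub_sub_sub_cancel_left (T n x) (T (n + 1) x) (f x)]
    exact enorm_sub_le.trans_eq (add_comm _ _)
  calc ∑' n, ∫⁻ x, ‖T (n + 1) x - T n x‖ₑ ∂μ
      ≤ ∑' n, (e (n + 1) + e n) := ENNReal.tsum_le_tsum hstep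
    _ = ∑' n, e (n + 1) + (e 0 + ∑' n, e (n + 1)) := by
      rw [ENNReal.tsum_add, tsum_eq_zero_add' (f := e) ENNReal.summable]
    _ = ∫⁻ x, ‖f x‖ₑ ∂μ + 2 * ∑' n, e (n + 1) := by rw [he0]; ring

lemma Integrable.exists_simpleFunc_lintegral_enorm_sub_lt {f : X → E} (hf : Integrable f μ)
    {ε : ℝ≥0∞} (hε : ε ≠ 0) : ∃ s : SimpleFunc X E, ∫⁻ x, ‖f x - s x‖ₑ ∂μ < ε := by
  obtain ⟨s, hs, -⟩ := (memLp_one_iff_integrable.2 hf).exists_simpleFunc_eLpNorm_sub_lt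
    ENNReal.one_ne_top hε
  exact ⟨s, by simpa [eLpNorm_one_eq_lintegral_enorm] using hs⟩

theorem Integrable.exists_simpleFunc_hasSum_ae [CompleteSpace E] {f : X → E}
    (hf : Integrable f μ) {ε : ℝ≥0∞} (hε : ε ≠ 0) :
    ∃ d : ℕ → SimpleFunc X E, (∀ᵐ x ∂μ, HasSum (fun n => d n x) (f x)) ∧
      ∑' n, ∫⁻ x, ‖d n x‖ₑ ∂μ ≤ ∫⁻ x, ‖f x‖ₑ ∂μ + ε := by
  obtain ⟨δ, hδ0, hδ⟩ := ENNReal.exists_pos_tsum_mul_lt_of_countable hε (fun _ : ℕ => 2)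
    fun _ => ENNReal.ofNat_ne_top
  choose S hS using fun n => hf.exists_simpleFunc_lintegral_enorm_sub_lt
    (ENNReal.coe_ne_zero.2 (hδ0 n).ne')
  let T : ℕ → SimpleFunc X E := fun | 0 => 0 | n + 1 => S n
  have hT : ∀ n, AEStronglyMeasurable (T n) μ := fun n => (T n).aestronglyMeasurable
  have hT0 : ⇑(T 0) = 0 := SimpleFunc.coe_zero
  have hδ' : 2 * ∑' n, ∫⁻ x, ‖f x - T (n + 1) x‖ₑ ∂μ < ε := by
    rw [← ENNReal.tsum_mul_left]
    exact (ENNReal.tsum_le_tsum fun n => by gcongr; exact (hS n).le).trans_lt hδ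
  refine ⟨fun n => T (n + 1) - T n, ?_, ?_⟩
  · have hfin : ∑' n, ∫⁻ x, ‖f x - T n x‖ₑ ∂μ ≠ ∞ := by
      rw [tsum_eq_zero_add' ENNReal.summable]
      simp only [hT0, Pi.zero_apply, sub_zero]
      exact ENNReal.add_ne_top.2 ⟨hf.2.ne, ne_top_of_le_ne_top (ne_top_of_lt hδ')
        (le_mul_of_one_le_left zero_le one_le_two)⟩
    simp only [SimpleFunc.coe_sub, Pi.sub_apply]
    exact ae_hasSum_sub_of_tsum_lintegral_enorm_sub_ne_top (T := fun n => ⇑(T n))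
      hf.1 hT hT0 hfin
  · exact (tsum_lintegral_enorm_sub_le hf.1 hT hT0).trans (by gcongr)

end MeasureTheory

section OrderedBanach

variable {D : Type*} [NormedAddCommGroup D] [PartialOrder D] [IsOrderedAddMonoid D]

lemma exists_dominating_norm_le (hgen : ∀ x : D, ∃ y z : D, 0 ≤ y ∧ 0 ≤ z ∧ x = y - z)
    {C C' : ℝ} (hCC' : C < C')
    (hdom : ∀ x : D, sInf {r : ℝ | ∃ a : D, 0 ≤ a ∧ -a ≤ x ∧ x ≤ a ∧ r = ‖a‖} ≤ C * ‖x‖)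
    (v : D) : ∃ a, 0 ≤ a ∧ -a ≤ v ∧ v ≤ a ∧ ‖a‖ ≤ C' * ‖v‖ := by
  rcases eq_or_ne v 0 with rfl | hv
  · exact ⟨0, le_rfl, by simp, le_rfl, by simp⟩
  obtain ⟨y, z, hy, hz, hyz⟩ := hgen v
  have hne : {r : ℝ | ∃ a : D, 0 ≤ a ∧ -a ≤ v ∧ v ≤ a ∧ r = ‖a‖}.Nonempty := by
    refine ⟨_, y + z, add_nonneg hy hz, ?_, ?_, rfl⟩
    · rw [hyz, neg_add']
      exact sub_le_sub_right (neg_le_self hy) z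
    · rw [hyz, sub_eq_add_neg]
      exact add_le_add_right (neg_le_self hz) y
  obtain ⟨_, ⟨a, ha0, hav, hva, rfl⟩, ha⟩ := exists_lt_of_csInf_lt hne
    ((hdom v).trans_lt (mul_lt_mul_of_pos_right hCC' (norm_pos_iff.2 hv)))
  exact ⟨a, ha0, hav, hva, ha.le⟩

variable [CompleteSpace D] [OrderClosedTopology D] {X : Type*} [MeasurableSpace X]
  {μ : Measure X}

theorem MeasureTheory.Integrable.exists_integrable_dominating {K : ℝ} (hK : 0 ≤ K)
    (hdom : ∀ v : D, ∃ a, 0 ≤ a ∧ -a ≤ v ∧ v ≤ a ∧ ‖a‖ ≤ K * ‖v‖) {f : X → D}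
    (hf : Integrable f μ) {ε : ℝ} (hε : 0 < ε) :
    ∃ g : X → D, Integrable g μ ∧ (∀ x, 0 ≤ g x) ∧ (∀ᵐ x ∂μ, -g x ≤ f x ∧ f x ≤ g x) ∧
      ∫ x, ‖g x‖ ∂μ ≤ K * (∫ x, ‖f x‖ ∂μ + ε) := by
  choose A hA0 hAv hvA hA using hdom
  obtain ⟨d, hd, hd_le⟩ := hf.exists_simpleFunc_hasSum_ae (ENNReal.ofReal_pos.2 hε).ne'
  -- `A` need not be measurable, but its composition with a simple function is simple.
  let g : ℕ → SimpleFunc X D := fun n => (d n).map A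
  have hg : ∀ n, AEStronglyMeasurable (g n) μ := fun n => (g n).aestronglyMeasurable
  have hg_le : ∑' n, ∫⁻ x, ‖g n x‖ₑ ∂μ ≤
      ENNReal.ofReal (K * (∫ x, ‖f x‖ ∂μ + ε)) := by
    have hA_enorm : ∀ v, ‖A v‖ₑ ≤ ENNReal.ofReal K * ‖v‖ₑ := fun v => by
      rw [← ofReal_norm, ← ofReal_norm, ← ENNReal.ofReal_mul hK]
      exact ENNReal.ofReal_le_ofReal (hA v)
    calc ∑' n, ∫⁻ x, ‖g n x‖ₑ ∂μ
        ≤ ∑' n, ENNReal.ofReal K * ∫⁻ x, ‖d n x‖ₑ ∂μ := ENNReal.tsum_le_tsum fun n =>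
          (lintegral_mono fun x => hA_enorm _).trans_eq
            (lintegral_const_mul' _ _ ENNReal.ofReal_ne_top)
      _ ≤ ENNReal.ofReal K * (∫⁻ x, ‖f x‖ₑ ∂μ + ENNReal.ofReal ε) := by
        rw [ENNReal.tsum_mul_left]; gcongr
      _ = ENNReal.ofReal (K * (∫ x, ‖f x‖ ∂μ + ε)) := by
        rw [← ofReal_integral_norm_eq_lintegral_enorm hf,
          ← ENNReal.ofReal_add (by positivity) hε.le, ENNReal.ofReal_mul hK]
  have hg_fin := ne_top_of_le_ne_top ENNReal.ofReal_ne_top hg_le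
  have hG := integrable_tsum_of_tsum_lintegral_enorm_ne_top hg hg_fin
  refine ⟨fun x => ∑' n, g n x, hG, fun x => tsum_nonneg fun n => hA0 _, ?_, ?_⟩
  · filter_upwards [hd, ae_summable_norm_of_tsum_lintegral_enorm_ne_top hg hg_fin]
      with x hdx hgx
    have hgx := hgx.of_norm.hasSum
    exact ⟨hasSum_le (fun n => hAv _) hgx.neg hdx, hasSum_le (fun n => hvA _) hdx hgx⟩
  · rw [integral_norm_eq_lintegral_enorm hG.1]
    exact ENNReal.toReal_le_of_le_ofReal (by positivity)
      ((lintegral_enorm_tsum_le hg).trans hg_le)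

end OrderedBanach

theorem integrable_function_dominated_by_positive_integrable_function_general
    {X : Type*} [MeasurableSpace X] (μ : Measure X)
    {D : Type*} [NormedAddCommGroup D] [CompleteSpace D]
    [PartialOrder D] [CovariantClass D D (· + ·) (· ≤ ·)]
    (hclosed : IsClosed {x : D | 0 ≤ x})
    (hgen : ∀ x : D, ∃ y z : D, 0 ≤ y ∧ 0 ≤ z ∧ x = y - z)
    (C : ℝ) (hC : 0 < C)
    (hdom : ∀ x : D,
      sInf {r : ℝ | ∃ a : D, 0 ≤ a ∧ -a ≤ x ∧ x ≤ a ∧ r = ‖a‖} ≤ C * ‖x‖)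
    (f : X → D) (hf : Integrable f μ) (ε : ℝ) (hε : 0 < ε) :
    ∃ g : X → D, Integrable g μ ∧ (∀ x, 0 ≤ g x) ∧
      (∀ᵐ x ∂μ, -g x ≤ f x ∧ f x ≤ g x) ∧
      ∫ x, ‖g x‖ ∂μ ≤ C * (∫ x, ‖f x‖ ∂μ + ε) := by
  have : IsOrderedAddMonoid D := { add_le_add_left := fun _ _ h c => add_le_add_left h c }
  have : OrderClosedTopology D := ⟨isClosed_le_of_isClosed_nonneg hclosed⟩
  set I := ∫ x, ‖f x‖ ∂μ
  have hI : 0 < I + ε / 2 := by positivity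
  -- Chosen so that `C' * (I + ε / 2) = C * (I + ε)`.
  set C' := C * (I + ε) / (I + ε / 2)
  have hCC' : C < C' := by
    rw [lt_div_iff₀ hI]
    gcongr
    linarith
  obtain ⟨g, hg, hg0, hfg, hg_le⟩ := hf.exists_integrable_dominating (by positivity)
    (exists_dominating_norm_le hgen hCC' hdom) (half_pos hε)
  exact ⟨g, hg, hg0, hfg, hg_le.trans_eq (div_mul_cancel₀ _ hI.ne')⟩

/-- For a Bochner integrable function `f` with values in an ordered Banach space with
closed generating cone and a `C`-absolutely dominating norm, there is a Bochner
integrable positive function `g` with `-g ≤ f ≤ g` a.e. and `∫ ‖g‖ ≤ C (∫ ‖f‖ + ε)`. -/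
theorem integrable_function_dominated_by_positive_integrable_function
    {X : Type*} [MeasurableSpace X] (μ : Measure X)
    [μ.IsComplete] [SigmaFinite μ]
    {D : Type*} [NormedAddCommGroup D] [NormedSpace ℝ D] [CompleteSpace D]
    [PartialOrder D] [CovariantClass D D (· + ·) (· ≤ ·)]
    (hsmul : ∀ (c : ℝ) (x : D), 0 ≤ c → 0 ≤ x → 0 ≤ c • x)
    (hclosed : IsClosed {x : D | 0 ≤ x})
    (hgen : ∀ x : D, ∃ y z : D, 0 ≤ y ∧ 0 ≤ z ∧ x = y - z)
    (C : ℝ) (hC : 0 < C)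
    (hdom : ∀ x : D,
      sInf {r : ℝ | ∃ a : D, 0 ≤ a ∧ -a ≤ x ∧ x ≤ a ∧ r = ‖a‖} ≤ C * ‖x‖)
    (f : X → D) (hf : Integrable f μ) (ε : ℝ) (hε : 0 < ε) :
    ∃ g : X → D, Integrable g μ ∧ (∀ x, 0 ≤ g x) ∧
      (∀ᵐ x ∂μ, -g x ≤ f x ∧ f x ≤ g x) ∧
      ∫ x, ‖g x‖ ∂μ ≤ C * (∫ x, ‖f x‖ ∂μ + ε) :=
  integrable_function_dominated_by_positive_integrable_function_general μ hclosed hgen C hC hdom f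
    hf ε hε
end

section
/- Let D be a real Banach space equipped with a partial order making it an ordered vector space. Suppose that for every sequence x : ℕ → D with ∑ₙ ‖xₙ‖ < ∞ there exists a sequence a : ℕ → D⁺ with −aₙ ≤ xₙ ≤ aₙ for all n and ∑ₙ ‖aₙ‖ < ∞ (i.e., the Bochner integrable functions ℕ → D with respect to counting measure form a directed ordered vector space). Then D⁺ is generating (D = D⁺ − D⁺) and the norm of D is absolutely dominating: there exists C > 0 with C·‖x‖ ≥ inf { ‖a‖ : a ∈ D⁺, −a ≤ x ≤ a } for all x ∈ D. -/
/-!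
If the norm were not absolutely dominating, then for every `n` there would be an `x` all of
whose dominators `a` (`0 ≤ a`, `-a ≤ x ≤ a`) have `‖a‖ > 4ⁿ‖x‖`. This property is invariant
under positive scaling, so we may take `‖xₙ‖ = 2⁻ⁿ`, and then every dominator of `xₙ` has norm
`> 2ⁿ`. The sequence `(xₙ)` is summable, but a dominating sequence `(aₙ)` has unbounded norms,
so it cannot be summable.
-/

/-- In a lattice-ordered group this is `|x| ≤ a`. -/
def AbsDominates {α : Type*} [AddGroup α] [LE α] (a x : α) : Prop :=
  0 ≤ a ∧ -a ≤ x ∧ x ≤ a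

namespace AbsDominates

theorem zero {α : Type*} [AddGroup α] [Preorder α] : AbsDominates (0 : α) 0 :=
  ⟨le_rfl, neg_zero.le, le_rfl⟩

theorem sub_nonneg {α : Type*} [AddGroup α] [LE α] [AddRightMono α] {a x : α}
    (h : AbsDominates a x) : 0 ≤ a - x :=
  _root_.sub_nonneg.mpr h.2.2

theorem smul {𝕜 α : Type*} [Semiring 𝕜] [PartialOrder 𝕜] [AddCommGroup α] [PartialOrder α]
    [Module 𝕜 α] [PosSMulMono 𝕜 α] {a x : α} (h : AbsDominates a x) {c : 𝕜} (hc : 0 ≤ c) :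
    AbsDominates (c • a) (c • x) :=
  ⟨smul_nonneg hc h.1, smul_neg c a ▸ smul_le_smul_of_nonneg_left h.2.1 hc,
    smul_le_smul_of_nonneg_left h.2.2 hc⟩

end AbsDominates

theorem sInf_le_norm_of_absDominates {α : Type*} [SeminormedAddCommGroup α] [LE α] {a x : α}
    (h : AbsDominates a x) :
    sInf {r : ℝ | ∃ a : α, 0 ≤ a ∧ -a ≤ x ∧ x ≤ a ∧ r = ‖a‖} ≤ ‖a‖ :=
  csInf_le ⟨0, fun _ ⟨b, _, _, _, hr⟩ => hr ▸ norm_nonneg b⟩ ⟨a, h.1, h.2.1, h.2.2, rfl⟩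

section OrderedNormedSpace

variable {D : Type*} [NormedAddCommGroup D] [NormedSpace ℝ D] [PartialOrder D] [PosSMulMono ℝ D]

theorem lt_norm_of_absDominates_smul {C : ℝ} {x : D}
    (hx : ∀ a, AbsDominates a x → C * ‖x‖ < ‖a‖) {t : ℝ} (ht : 0 < t) :
    ∀ a, AbsDominates a (t • x) → C * ‖t • x‖ < ‖a‖ := by
  intro a ha
  have hdom : AbsDominates (t⁻¹ • a) x := by
    simpa only [smul_smul, inv_mul_cancel₀ ht.ne', one_smul] using ha.smul (inv_nonneg.mpr ht.le)
  have hlt := hx _ hdom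
  rw [norm_smul, Real.norm_of_nonneg (inv_nonneg.mpr ht.le)] at hlt
  calc C * ‖t • x‖ = t * (C * ‖x‖) := by
        rw [norm_smul, Real.norm_of_nonneg ht.le]; ring
    _ < t * (t⁻¹ * ‖a‖) := mul_lt_mul_of_pos_left hlt ht
    _ = ‖a‖ := mul_inv_cancel_left₀ ht.ne' _

theorem exists_norm_eq_of_forall_absDominates_lt {C : ℝ} {x : D}
    (hx : ∀ a, AbsDominates a x → C * ‖x‖ < ‖a‖) {r : ℝ} (hr : 0 < r) :
    ∃ y : D, ‖y‖ = r ∧ ∀ a, AbsDominates a y → C * r < ‖a‖ := by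
  have hx0 : x ≠ 0 := by
    rintro rfl
    simpa using hx 0 AbsDominates.zero
  have hnorm : ‖(r / ‖x‖) • x‖ = r := by
    rw [norm_smul, Real.norm_of_nonneg (by positivity),
      div_mul_cancel₀ r (norm_ne_zero_iff.mpr hx0)]
  refine ⟨(r / ‖x‖) • x, hnorm, fun a ha => ?_⟩
  simpa only [hnorm] using lt_norm_of_absDominates_smul hx (by positivity) a ha

theorem exists_absDominates_norm_le_of_summable
    (hdir : ∀ x : ℕ → D, (Summable fun n => ‖x n‖) →
      ∃ a : ℕ → D, (∀ n, AbsDominates (a n) (x n)) ∧ Summable fun n => ‖a n‖) :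
    ∃ C : ℝ, 0 < C ∧ ∀ x : D, ∃ a, AbsDominates a x ∧ ‖a‖ ≤ C * ‖x‖ := by
  by_contra! h
  have hbad : ∀ n : ℕ, ∃ y : D, ‖y‖ = (1 / 2) ^ n ∧ ∀ a, AbsDominates a y → 2 ^ n < ‖a‖ := by
    intro n
    obtain ⟨x, hx⟩ := h (4 ^ n) (by positivity)
    obtain ⟨y, hy, hdom⟩ := exists_norm_eq_of_forall_absDominates_lt hx (r := (1 / 2) ^ n)
      (by positivity)
    have h42 : (4 : ℝ) ^ n * (1 / 2) ^ n = 2 ^ n := by rw [← mul_pow]; norm_num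
    exact ⟨y, hy, fun a ha => h42 ▸ hdom a ha⟩
  choose y hy hdom using hbad
  obtain ⟨a, ha, hsum⟩ := hdir y (by simpa only [hy] using summable_geometric_two)
  obtain ⟨n, hn⟩ := pow_unbounded_of_one_lt (∑' n, ‖a n‖) one_lt_two
  exact hn.not_gt ((hdom n (a n) (ha n)).trans_le (hsum.le_tsum n fun j _ => norm_nonneg _))

end OrderedNormedSpace

theorem directed_summable_functions_implies_absolutely_dominating_general
    {D : Type*} [NormedAddCommGroup D] [NormedSpace ℝ D]
    [PartialOrder D] [CovariantClass D D (· + ·) (· ≤ ·)]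
    (hsmul : ∀ (c : ℝ) (x : D), 0 ≤ c → 0 ≤ x → 0 ≤ c • x)
    (hdir : ∀ x : ℕ → D, (Summable fun n => ‖x n‖) →
      ∃ a : ℕ → D, (∀ n, 0 ≤ a n ∧ -a n ≤ x n ∧ x n ≤ a n) ∧
        Summable fun n => ‖a n‖) :
    (∀ x : D, ∃ y z : D, 0 ≤ y ∧ 0 ≤ z ∧ x = y - z) ∧
    ∃ C : ℝ, 0 < C ∧ ∀ x : D,
      sInf {r : ℝ | ∃ a : D, 0 ≤ a ∧ -a ≤ x ∧ x ≤ a ∧ r = ‖a‖} ≤ C * ‖x‖ := by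
  have : IsOrderedAddMonoid D := { add_le_add_left := fun _ _ h c => add_le_add_left h c }
  have : PosSMulMono ℝ D := .of_smul_nonneg fun c hc x hx => hsmul c x hc hx
  obtain ⟨C, hC, hdom⟩ := exists_absDominates_norm_le_of_summable hdir
  refine ⟨fun x => ?_, C, hC, fun x => ?_⟩
  · obtain ⟨a, ha, -⟩ := hdom x
    exact ⟨a, a - x, ha.1, ha.sub_nonneg, (sub_sub_cancel a x).symm⟩
  · obtain ⟨a, ha, hle⟩ := hdom x
    exact (sInf_le_norm_of_absDominates ha).trans hle

/-- If the Bochner integrable functions `ℕ → D` (w.r.t. counting measure) form a directed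
ordered vector space, then the cone of `D` is generating and the norm of `D` is
absolutely dominating. -/
theorem directed_summable_functions_implies_absolutely_dominating
    {D : Type*} [NormedAddCommGroup D] [NormedSpace ℝ D] [CompleteSpace D]
    [PartialOrder D] [CovariantClass D D (· + ·) (· ≤ ·)]
    (hsmul : ∀ (c : ℝ) (x : D), 0 ≤ c → 0 ≤ x → 0 ≤ c • x)
    (hdir : ∀ x : ℕ → D, (Summable fun n => ‖x n‖) →
      ∃ a : ℕ → D, (∀ n, 0 ≤ a n ∧ -a n ≤ x n ∧ x n ≤ a n) ∧
        Summable fun n => ‖a n‖) :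
    (∀ x : D, ∃ y z : D, 0 ≤ y ∧ 0 ≤ z ∧ x = y - z) ∧
    ∃ C : ℝ, 0 < C ∧ ∀ x : D,
      sInf {r : ℝ | ∃ a : D, 0 ≤ a ∧ -a ≤ x ∧ x ≤ a ∧ r = ‖a‖} ≤ C * ‖x‖ :=
  directed_summable_functions_implies_absolutely_dominating_general hsmul hdir
end

section
/- Let D be a real vector space equipped with a partial order making it a directed ordered vector space (D = D⁺ − D⁺). Suppose ‖·‖₁ and ‖·‖₂ are two norms on D, each making D a Banach space in which the positive cone D⁺ = {x : 0 ≤ x} is closed. Then ‖·‖₁ and ‖·‖₂ are equivalent norms. -/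
open Filter

/-- `N` is a norm on the real vector space `D` making `D` a Banach space
(completeness phrased via convergence of absolutely summable series) in which the
positive cone is (sequentially, equivalently topologically) closed. -/
structure IsCompleteNormWithClosedCone (D : Type*) [AddCommGroup D] [Module ℝ D]
    [PartialOrder D] (N : D → ℝ) : Prop where
  nonneg : ∀ x, 0 ≤ N x
  eq_zero_iff : ∀ x, N x = 0 ↔ x = 0
  smul_eq : ∀ (c : ℝ) (x : D), N (c • x) = |c| * N x
  triangle : ∀ x y, N (x + y) ≤ N x + N y
  complete : ∀ u : ℕ → D, (Summable fun n => N (u n)) →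
    ∃ s : D, Tendsto (fun n => N (s - ∑ i ∈ Finset.range n, u i)) atTop (nhds 0)
  coneClosed : ∀ (x : ℕ → D) (l : D), (∀ n, 0 ≤ x n) →
    Tendsto (fun n => N (x n - l)) atTop (nhds 0) → 0 ≤ l

/-!
The identity `(D, N₁) → (D, N₂)` has closed graph, hence is bounded by the closed graph theorem;
by symmetry the norms are equivalent.

Closedness of the graph rests on Andô's theorem: in a Banach space with closed generating cone,
every `x` splits as `u - v` with `u, v ≥ 0` and `‖u‖ + ‖v‖ ≤ α ‖x‖`. (The decomposition norm
`inf (‖u‖ + ‖v‖)` is a complete norm dominating `‖·‖`, so the open mapping theorem makes the two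
equivalent.) Now let `z n → 0` fast for `N₁` and `z n → y` for `N₂`. Splitting `z n = p n - q n`
in this controlled way, the tails `w m = ∑_{k ≥ m} p k` dominate `z k` for `k ≥ m` and tend to `0`
for `N₁`. Closedness of the cone for `N₂` gives `y ≤ w m`, and then closedness for `N₁` gives
`y ≤ 0`; the same argument applied to `-z` gives `0 ≤ y`.
-/

open Topology

/-- `D` normed by `N`: a type synonym, so that two norms on `D` give two normed spaces. -/
def WithNorm {D : Type*} (_N : D → ℝ) : Type _ := D

namespace WithNorm

variable {D : Type*} [AddCommGroup D] [Module ℝ D] (N : D → ℝ)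

instance : AddCommGroup (WithNorm N) := inferInstanceAs (AddCommGroup D)

instance : Module ℝ (WithNorm N) := inferInstanceAs (Module ℝ D)

instance : Norm (WithNorm N) := ⟨N⟩

def linearEquiv : D ≃ₗ[ℝ] WithNorm N := LinearEquiv.refl ℝ D

variable [PartialOrder D]

instance : PartialOrder (WithNorm N) := inferInstanceAs (PartialOrder D)

instance [IsOrderedAddMonoid D] : IsOrderedAddMonoid (WithNorm N) :=
  inferInstanceAs (IsOrderedAddMonoid D)

instance [PosSMulMono ℝ D] : PosSMulMono ℝ (WithNorm N) := inferInstanceAs (PosSMulMono ℝ D)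

variable {N}

theorem normedSpaceCore (h : IsCompleteNormWithClosedCone D N) :
    NormedSpace.Core ℝ (WithNorm N) where
  norm_nonneg := h.nonneg
  norm_smul := h.smul_eq
  norm_triangle := h.triangle
  norm_eq_zero_iff := h.eq_zero_iff

variable [hN : Fact (IsCompleteNormWithClosedCone D N)]

noncomputable instance : NormedAddCommGroup (WithNorm N) := .ofCore (normedSpaceCore hN.out)

noncomputable instance : NormedSpace ℝ (WithNorm N) := .ofCore (normedSpaceCore hN.out)

instance : CompleteSpace (WithNorm N) := by
  refine NormedAddCommGroup.completeSpace_of_summable_imp_tendsto fun u hu => ?_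
  obtain ⟨s, hs⟩ := hN.out.complete u hu
  exact ⟨s, tendsto_iff_norm_sub_tendsto_zero.2 (hs.congr fun n => norm_sub_rev _ _)⟩

instance [IsOrderedAddMonoid D] : OrderClosedTopology (WithNorm N) where
  isClosed_le' := isClosed_le_of_isClosed_nonneg (G := WithNorm N) <|
    IsSeqClosed.isClosed fun x l hx hl =>
      hN.out.coneClosed x l hx (tendsto_iff_norm_sub_tendsto_zero.1 hl)

end WithNorm

section DecompositionNorm

variable {E : Type*} [NormedAddCommGroup E] [PartialOrder E]

def decompositionCosts (x : E) : Set ℝ :=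
  {r | ∃ u v : E, 0 ≤ u ∧ 0 ≤ v ∧ x = u - v ∧ ‖u‖ + ‖v‖ = r}

noncomputable def decompositionNorm (x : E) : ℝ := sInf (decompositionCosts x)

theorem decompositionCosts_neg (x : E) : decompositionCosts (-x) = decompositionCosts x := by
  have swap : ∀ y : E, decompositionCosts (-y) ⊆ decompositionCosts y := by
    rintro y _ ⟨u, v, hu, hv, hy, rfl⟩
    exact ⟨v, u, hv, hu, by rw [← neg_neg y, hy, neg_sub], add_comm _ _⟩
  exact (swap x).antisymm (by simpa using swap (-x))

theorem bddBelow_decompositionCosts (x : E) : BddBelow (decompositionCosts x) :=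
  ⟨0, by rintro _ ⟨u, v, -, -, -, rfl⟩; positivity⟩

theorem decompositionNorm_nonneg (x : E) : 0 ≤ decompositionNorm x :=
  Real.sInf_nonneg <| by rintro _ ⟨u, v, -, -, -, rfl⟩; positivity

theorem decompositionNorm_sub_le {u v : E} (hu : 0 ≤ u) (hv : 0 ≤ v) :
    decompositionNorm (u - v) ≤ ‖u‖ + ‖v‖ :=
  csInf_le (bddBelow_decompositionCosts _) ⟨u, v, hu, hv, rfl, rfl⟩

theorem decompositionNorm_zero : decompositionNorm (0 : E) = 0 :=
  le_antisymm (by simpa using decompositionNorm_sub_le le_rfl (le_refl (0 : E)))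
    (decompositionNorm_nonneg 0)

theorem decompositionNorm_neg (x : E) : decompositionNorm (-x) = decompositionNorm x :=
  congrArg sInf (decompositionCosts_neg x)

variable (hgen : ∀ x : E, ∃ u v : E, 0 ≤ u ∧ 0 ≤ v ∧ x = u - v)
include hgen

theorem decompositionCosts_nonempty (x : E) : (decompositionCosts x).Nonempty :=
  let ⟨u, v, hu, hv, hx⟩ := hgen x
  ⟨_, u, v, hu, hv, hx, rfl⟩

theorem norm_le_decompositionNorm (x : E) : ‖x‖ ≤ decompositionNorm x := by
  refine le_csInf (decompositionCosts_nonempty hgen x) ?_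
  rintro _ ⟨u, v, -, -, rfl, rfl⟩
  exact norm_sub_le u v

theorem exists_decomposition_lt (x : E) {ε : ℝ} (hε : 0 < ε) :
    ∃ u v : E, 0 ≤ u ∧ 0 ≤ v ∧ x = u - v ∧ ‖u‖ + ‖v‖ < decompositionNorm x + ε := by
  obtain ⟨_, ⟨u, v, hu, hv, hx, rfl⟩, hlt⟩ :=
    exists_lt_of_csInf_lt (decompositionCosts_nonempty hgen x) (lt_add_of_pos_right _ hε)
  exact ⟨u, v, hu, hv, hx, hlt⟩

theorem decompositionNorm_add_le [IsOrderedAddMonoid E] (x y : E) :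
    decompositionNorm (x + y) ≤ decompositionNorm x + decompositionNorm y := by
  refine le_of_forall_pos_lt_add fun ε hε => ?_
  obtain ⟨u, v, hu, hv, rfl, hx⟩ := exists_decomposition_lt hgen x (half_pos hε)
  obtain ⟨u', v', hu', hv', rfl, hy⟩ := exists_decomposition_lt hgen y (half_pos hε)
  calc decompositionNorm (u - v + (u' - v'))
      = decompositionNorm ((u + u') - (v + v')) := by rw [add_sub_add_comm]
    _ ≤ ‖u + u'‖ + ‖v + v'‖ := decompositionNorm_sub_le (add_nonneg hu hu') (add_nonneg hv hv')
    _ ≤ ‖u‖ + ‖u'‖ + (‖v‖ + ‖v'‖) := add_le_add (norm_add_le u u') (norm_add_le v v')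
    _ < decompositionNorm (u - v) + decompositionNorm (u' - v') + ε := by linarith

theorem decompositionNorm_complete [CompleteSpace E] [IsOrderedAddMonoid E] [OrderClosedTopology E]
    (u : ℕ → E) (hu : Summable fun n => decompositionNorm (u n)) :
    ∃ s : E, Tendsto (fun n => decompositionNorm (s - ∑ i ∈ Finset.range n, u i)) atTop (𝓝 0) := by
  choose p q hp hq hpq hlt using
    fun n => exists_decomposition_lt hgen (u n) (pow_pos (one_half_pos (α := ℝ)) n)
  have hsum : Summable fun n => ‖p n‖ + ‖q n‖ :=
    (hu.add summable_geometric_two).of_nonneg_of_le (fun n => by positivity) fun n => (hlt n).le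
  have hp' : Summable fun n => ‖p n‖ :=
    hsum.of_nonneg_of_le (fun _ => norm_nonneg _) fun n => le_add_of_nonneg_right (norm_nonneg _)
  have hq' : Summable fun n => ‖q n‖ :=
    hsum.of_nonneg_of_le (fun _ => norm_nonneg _) fun n => le_add_of_nonneg_left (norm_nonneg _)
  refine ⟨∑' k, p k - ∑' k, q k, squeeze_zero (fun n => decompositionNorm_nonneg _) (fun n => ?_)
    (by simpa using (tendsto_sum_nat_add fun k => ‖p k‖).add (tendsto_sum_nat_add fun k => ‖q k‖))⟩
  have tail : (∑' k, p k - ∑' k, q k) - ∑ i ∈ Finset.range n, u i =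
      ∑' k, p (k + n) - ∑' k, q (k + n) := by
    rw [← hp'.of_norm.sum_add_tsum_nat_add n, ← hq'.of_norm.sum_add_tsum_nat_add n]
    simp only [hpq, Finset.sum_sub_distrib]
    abel
  rw [tail]
  exact (decompositionNorm_sub_le (tsum_nonneg fun k => hp _) (tsum_nonneg fun k => hq _)).trans
    (add_le_add (norm_tsum_le_tsum_norm ((summable_nat_add_iff n).2 hp'))
      (norm_tsum_le_tsum_norm ((summable_nat_add_iff n).2 hq')))

variable [NormedSpace ℝ E] [PosSMulMono ℝ E]

theorem decompositionNorm_smul_le {c : ℝ} (hc : 0 ≤ c) (x : E) :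
    decompositionNorm (c • x) ≤ c * decompositionNorm x := by
  rw [decompositionNorm, decompositionNorm, ← smul_eq_mul, ← Real.sInf_smul_of_nonneg hc]
  refine csInf_le_csInf (bddBelow_decompositionCosts _)
    (decompositionCosts_nonempty hgen x).smul_set ?_
  rintro _ ⟨_, ⟨u, v, hu, hv, rfl, rfl⟩, rfl⟩
  exact ⟨c • u, c • v, smul_nonneg hc hu, smul_nonneg hc hv, smul_sub c u v,
    by simp [norm_smul, abs_of_nonneg hc, mul_add]⟩

theorem decompositionNorm_smul (c : ℝ) (x : E) :
    decompositionNorm (c • x) = |c| * decompositionNorm x := by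
  suffices h : ∀ c : ℝ, 0 ≤ c → decompositionNorm (c • x) = c * decompositionNorm x by
    rcases le_total 0 c with hc | hc
    · rw [h c hc, abs_of_nonneg hc]
    · rw [← decompositionNorm_neg, ← neg_smul, h (-c) (neg_nonneg.2 hc), abs_of_nonpos hc]
  intro c hc
  rcases hc.eq_or_lt with rfl | hc
  · simp [decompositionNorm_zero]
  refine (decompositionNorm_smul_le hgen hc.le x).antisymm ?_
  calc c * decompositionNorm x = c * decompositionNorm (c⁻¹ • c • x) := by
        rw [inv_smul_smul₀ hc.ne']
    _ ≤ c * (c⁻¹ * decompositionNorm (c • x)) := by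
        gcongr; exact decompositionNorm_smul_le hgen (inv_nonneg.2 hc.le) _
    _ = decompositionNorm (c • x) := by field_simp

theorem isCompleteNormWithClosedCone_decompositionNorm [CompleteSpace E] [IsOrderedAddMonoid E]
    [OrderClosedTopology E] : IsCompleteNormWithClosedCone E decompositionNorm where
  nonneg := decompositionNorm_nonneg
  eq_zero_iff x := ⟨fun h => norm_le_zero_iff.1 (h ▸ norm_le_decompositionNorm hgen x),
    fun h => h ▸ decompositionNorm_zero⟩
  smul_eq := decompositionNorm_smul hgen
  triangle := decompositionNorm_add_le hgen
  complete := decompositionNorm_complete hgen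
  coneClosed _ _ hx hl := ge_of_tendsto' (tendsto_iff_norm_sub_tendsto_zero.2 <|
    squeeze_zero (fun _ => norm_nonneg _) (fun _ => norm_le_decompositionNorm hgen _) hl) hx

end DecompositionNorm

section OrderedBanachSpace

variable {E : Type*} [NormedAddCommGroup E] [NormedSpace ℝ E] [CompleteSpace E] [PartialOrder E]
  [IsOrderedAddMonoid E] [PosSMulMono ℝ E] [OrderClosedTopology E]
  (hgen : ∀ x : E, ∃ u v : E, 0 ≤ u ∧ 0 ≤ v ∧ x = u - v)
include hgen

/-- Andô's theorem. -/
theorem exists_decomposition_norm_le :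
    ∃ α : ℝ, ∀ x : E, ∃ u v : E, 0 ≤ u ∧ 0 ≤ v ∧ x = u - v ∧ ‖u‖ + ‖v‖ ≤ α * ‖x‖ := by
  have : Fact (IsCompleteNormWithClosedCone E decompositionNorm) :=
    ⟨isCompleteNormWithClosedCone_decompositionNorm hgen⟩
  let e : WithNorm (decompositionNorm : E → ℝ) ≃ₗ[ℝ] E := (WithNorm.linearEquiv _).symm
  have he : Continuous e :=
    AddMonoidHomClass.continuous_of_bound e 1 fun x => by
      rw [one_mul]
      exact norm_le_decompositionNorm hgen x
  obtain ⟨C, hC, hbound⟩ := SemilinearMapClass.bound_of_continuous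
    (e.toContinuousLinearEquivOfContinuous he).symm (ContinuousLinearEquiv.continuous _)
  have hdn : ∀ x : E, decompositionNorm x ≤ C * ‖x‖ := hbound
  refine ⟨2 * C, fun x => ?_⟩
  rcases eq_or_ne x 0 with rfl | hx
  · exact ⟨0, 0, le_rfl, le_rfl, by simp, by simp⟩
  obtain ⟨u, v, hu, hv, rfl, hlt⟩ :=
    exists_decomposition_lt hgen x (ε := C * ‖x‖) (by positivity)
  exact ⟨u, v, hu, hv, rfl, by linarith [hdn (u - v)]⟩

theorem exists_tendsto_zero_forall_le_of_summable_norm {z : ℕ → E}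
    (hz : Summable fun n => ‖z n‖) :
    ∃ w : ℕ → E, Tendsto w atTop (𝓝 0) ∧ ∀ m k, m ≤ k → z k ≤ w m := by
  obtain ⟨α, hα⟩ := exists_decomposition_norm_le hgen
  choose p q hp hq hpq hle using fun n => hα (z n)
  have hps : Summable p := Summable.of_norm <| (hz.mul_left α).of_nonneg_of_le
    (fun _ => norm_nonneg _) fun n => (le_add_of_nonneg_right (norm_nonneg _)).trans (hle n)
  refine ⟨fun m => ∑' k, p (k + m), tendsto_sum_nat_add p, fun m k hmk => ?_⟩
  obtain ⟨j, rfl⟩ := Nat.exists_eq_add_of_le' hmk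
  calc z (j + m) = p (j + m) - q (j + m) := hpq _
    _ ≤ p (j + m) := sub_le_self _ (hq _)
    _ ≤ ∑' k, p (k + m) := ((summable_nat_add_iff m).2 hps).le_tsum j fun i _ => hp _

theorem LinearEquiv.nonpos_of_tendsto {F : Type*} [AddCommGroup F] [Module ℝ F]
    [TopologicalSpace F] [PartialOrder F] [ClosedIicTopology F] (e : E ≃ₗ[ℝ] F)
    (he : ∀ x y, e x ≤ e y ↔ x ≤ y) {z : ℕ → E} {y : F} (hz : Tendsto z atTop (𝓝 0))
    (hy : Tendsto (fun n => e (z n)) atTop (𝓝 y)) : y ≤ 0 := by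
  obtain ⟨φ, hφ, hφz⟩ := extraction_forall_of_eventually fun n =>
    (tendsto_norm_zero.comp hz).eventually_lt_const (pow_pos (one_half_pos (α := ℝ)) n)
  obtain ⟨w, hw, hzw⟩ := exists_tendsto_zero_forall_le_of_summable_norm hgen <|
    summable_geometric_two.of_nonneg_of_le (fun _ => norm_nonneg _) fun n => (hφz n).le
  have hyw : ∀ m, e.symm y ≤ w m := fun m => by
    rw [← he, e.apply_symm_apply]
    exact le_of_tendsto (hy.comp hφ.tendsto_atTop)
      (eventually_atTop.2 ⟨m, fun k hk => (he _ _).2 (hzw m k hk)⟩)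
  simpa using (he (e.symm y) 0).2 (ge_of_tendsto' hw hyw)

theorem LinearEquiv.continuous_of_le_iff {F : Type*} [NormedAddCommGroup F] [NormedSpace ℝ F]
    [CompleteSpace F] [PartialOrder F] [IsOrderedAddMonoid F] [OrderClosedTopology F]
    (e : E ≃ₗ[ℝ] F) (he : ∀ x y, e x ≤ e y ↔ x ≤ y) : Continuous e := by
  refine e.toLinearMap.continuous_of_seq_closed_graph fun u x y hu hy => ?_
  have hz : Tendsto (fun n => u n - x) atTop (𝓝 0) := by simpa using hu.sub_const x
  have hez : Tendsto (fun n => e (u n - x)) atTop (𝓝 (y - e x)) := by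
    simpa using hy.sub_const (e x)
  have h₁ := e.nonpos_of_tendsto hgen he hz hez
  have h₂ := e.nonpos_of_tendsto hgen he (by simpa using hz.neg) (by simpa using hez.neg)
  exact le_antisymm (sub_nonpos.1 h₁) (by simpa using h₂)

end OrderedBanachSpace

theorem IsCompleteNormWithClosedCone.exists_le_mul {D : Type*} [AddCommGroup D] [Module ℝ D]
    [PartialOrder D] [IsOrderedAddMonoid D] [PosSMulMono ℝ D]
    (hgen : ∀ x : D, ∃ y z : D, 0 ≤ y ∧ 0 ≤ z ∧ x = y - z) {N M : D → ℝ}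
    (hN : IsCompleteNormWithClosedCone D N) (hM : IsCompleteNormWithClosedCone D M) :
    ∃ c : ℝ, 0 < c ∧ ∀ x, M x ≤ c * N x := by
  have := Fact.mk hN
  have := Fact.mk hM
  let e := (WithNorm.linearEquiv N).symm.trans (WithNorm.linearEquiv M)
  obtain ⟨c, hc, hbound⟩ :=
    SemilinearMapClass.bound_of_continuous e (e.continuous_of_le_iff hgen fun _ _ => Iff.rfl)
  exact ⟨c, hc, fun x => hbound (WithNorm.linearEquiv N x)⟩

/-- Any two complete norms with closed positive cone on a directed ordered vector space
are equivalent. -/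
theorem complete_norms_with_closed_cone_equivalent
    {D : Type*} [AddCommGroup D] [Module ℝ D] [PartialOrder D]
    [CovariantClass D D (· + ·) (· ≤ ·)]
    (hsmul : ∀ (c : ℝ) (x : D), 0 ≤ c → 0 ≤ x → 0 ≤ c • x)
    (hgen : ∀ x : D, ∃ y z : D, 0 ≤ y ∧ 0 ≤ z ∧ x = y - z)
    (N₁ N₂ : D → ℝ)
    (h₁ : IsCompleteNormWithClosedCone D N₁)
    (h₂ : IsCompleteNormWithClosedCone D N₂) :
    ∃ c₁ c₂ : ℝ, 0 < c₁ ∧ 0 < c₂ ∧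
      ∀ x : D, N₁ x ≤ c₁ * N₂ x ∧ N₂ x ≤ c₂ * N₁ x := by
  have : IsOrderedAddMonoid D :=
    ⟨fun _ _ h c => add_le_add_left h c, fun _ _ h c => add_le_add_right h c⟩
  have : PosSMulMono ℝ D := ⟨fun c hc a b hab => sub_nonneg.1 <| by
    simpa [smul_sub] using hsmul c (b - a) hc (sub_nonneg.2 hab)⟩
  obtain ⟨c₁, hc₁, h₂₁⟩ := h₂.exists_le_mul hgen h₁
  obtain ⟨c₂, hc₂, h₁₂⟩ := h₁.exists_le_mul hgen h₂
  exact ⟨c₁, c₂, hc₁, hc₂, fun x => ⟨h₂₁ x, h₁₂ x⟩⟩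
end

section
/- Let D be a real Banach space equipped with a partial order making it an ordered vector space with closed generating positive cone D⁺, and suppose the norm ‖·‖ is C-absolutely dominating for some C > 0, i.e., C·‖x‖ ≥ inf { ‖a‖ : a ∈ D⁺, −a ≤ x ≤ a } for all x. Then for every ε > 0 there exists a norm ρ on D equivalent to ‖·‖ such that (1+ε)²·ρ(x) ≥ inf { ρ(a) : a ∈ D⁺, −a ≤ x ≤ a } for every x ∈ D. -/
/-!
Let `ν x` be the infimum of `‖a‖` over all `a ≥ 0` with `-a ≤ x ≤ a`. Because the cone is
generating, `ν` is a seminorm; `C`-domination says `ν ≤ C ‖·‖`, and `ν a ≤ ‖a‖` for `a ≥ 0`.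
For `t = 1 / (K - 1)` the norm `ρ = ‖·‖ + t ν` is equivalent to `‖·‖`, and for `a ≥ 0` we have
`ρ a ≤ (1 + t) ‖a‖`, so the infimum of `ρ a` over the `a` dominating `x` is at most
`(1 + t) ν x = K t ν x ≤ K ρ x`. Take `K = (1 + ε)²`.
-/

/-- `ν` is a norm on the real vector space `D`. -/
structure IsNorm {D : Type*} [AddCommGroup D] [Module ℝ D] (ν : D → ℝ) : Prop where
  nonneg : ∀ x, 0 ≤ ν x
  eq_zero_iff : ∀ x, ν x = 0 ↔ x = 0
  smul_eq : ∀ (c : ℝ) (x : D), ν (c • x) = |c| * ν x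
  triangle : ∀ x y, ν (x + y) ≤ ν x + ν y

open Set

section OrderedModule

variable {D : Type*} [AddCommGroup D] [PartialOrder D]

/-- `ν` is `C`-absolutely dominating iff `absDomInf ν x ≤ C * ν x` for all `x`. -/
noncomputable def absDomInf (ν : D → ℝ) (x : D) : ℝ :=
  sInf {r : ℝ | ∃ a : D, 0 ≤ a ∧ -a ≤ x ∧ x ≤ a ∧ r = ν a}

variable {ν μ : D → ℝ} {x a : D}

lemma absDomInf_nonneg (hν : 0 ≤ ν) : 0 ≤ absDomInf ν x :=
  Real.sInf_nonneg (by rintro r ⟨a, -, -, -, rfl⟩; exact hν a)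

lemma absDomInf_le (hν : 0 ≤ ν) (ha : 0 ≤ a) (hxa : x ∈ Icc (-a) a) : absDomInf ν x ≤ ν a :=
  csInf_le ⟨0, by rintro r ⟨b, -, -, -, rfl⟩; exact hν b⟩ ⟨a, ha, hxa.1, hxa.2, rfl⟩

lemma le_absDomInf {r : ℝ} (hx : ∃ a, 0 ≤ a ∧ x ∈ Icc (-a) a)
    (h : ∀ a, 0 ≤ a → x ∈ Icc (-a) a → r ≤ ν a) : r ≤ absDomInf ν x := by
  obtain ⟨a, ha, hxa⟩ := hx
  refine le_csInf ⟨ν a, a, ha, hxa.1, hxa.2, rfl⟩ ?_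
  rintro _ ⟨b, hb, hxb₁, hxb₂, rfl⟩
  exact h b hb ⟨hxb₁, hxb₂⟩

lemma absDomInf_le_mul {k : ℝ} (hk : 0 < k) (hμ : 0 ≤ μ) (hx : ∃ a, 0 ≤ a ∧ x ∈ Icc (-a) a)
    (h : ∀ a, 0 ≤ a → μ a ≤ k * ν a) : absDomInf μ x ≤ k * absDomInf ν x := by
  rw [← div_le_iff₀' hk]
  refine le_absDomInf hx fun a ha hxa => ?_
  rw [div_le_iff₀' hk]
  exact (absDomInf_le hμ ha hxa).trans (h a ha)

variable [IsOrderedAddMonoid D]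

lemma absDomInf_le_self (hν : 0 ≤ ν) (ha : 0 ≤ a) : absDomInf ν a ≤ ν a :=
  absDomInf_le hν ha ⟨neg_le_self ha, le_rfl⟩

lemma add_mem_Icc_of_eq_sub {x y z : D} (hy : 0 ≤ y) (hz : 0 ≤ z) (hx : x = y - z) :
    0 ≤ y + z ∧ x ∈ Icc (-(y + z)) (y + z) := by
  subst hx
  refine ⟨add_nonneg hy hz, ?_, (sub_le_self y hz).trans (le_add_of_nonneg_right hz)⟩
  rw [neg_add']
  exact sub_le_sub_right (neg_le_self hy) z

variable [Module ℝ D] (p : Seminorm ℝ D)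

lemma absDomInf_add_le (hdominated : ∀ x : D, ∃ a, 0 ≤ a ∧ x ∈ Icc (-a) a) (x y : D) :
    absDomInf p (x + y) ≤ absDomInf p x + absDomInf p y := by
  rw [← sub_le_iff_le_add']
  refine le_absDomInf (hdominated y) fun b hb hyb => ?_
  rw [sub_le_comm]
  refine le_absDomInf (hdominated x) fun a ha hxa => ?_
  rw [sub_le_iff_le_add]
  refine (absDomInf_le (apply_nonneg p) (add_nonneg ha hb) ?_).trans (map_add_le_add p a b)
  exact ⟨by rw [neg_add]; exact add_le_add hxa.1 hyb.1, add_le_add hxa.2 hyb.2⟩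

variable [PosSMulMono ℝ D]

lemma smul_mem_Icc_abs_smul (c : ℝ) (hxa : x ∈ Icc (-a) a) :
    c • x ∈ Icc (-(|c| • a)) (|c| • a) := by
  obtain ⟨h₁, h₂⟩ := hxa
  rcases le_or_gt 0 c with hc | hc
  · rw [abs_of_nonneg hc]
    exact ⟨by simpa using smul_le_smul_of_nonneg_left h₁ hc, smul_le_smul_of_nonneg_left h₂ hc⟩
  · rw [abs_of_neg hc, neg_smul, neg_neg]
    exact ⟨smul_le_smul_of_nonpos_left h₂ hc.le,
      by simpa using smul_le_smul_of_nonpos_left h₁ hc.le⟩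

lemma absDomInf_smul_le (hdominated : ∀ x : D, ∃ a, 0 ≤ a ∧ x ∈ Icc (-a) a) (c : ℝ) (x : D) :
    absDomInf p (c • x) ≤ |c| * absDomInf p x := by
  rcases eq_or_ne c 0 with rfl | hc
  · simpa using absDomInf_le_self (apply_nonneg p) (le_refl (0 : D))
  have hc' : 0 < |c| := abs_pos.mpr hc
  rw [← div_le_iff₀' hc']
  refine le_absDomInf (hdominated x) fun a ha hxa => ?_
  rw [div_le_iff₀' hc', ← abs_abs c, ← Real.norm_eq_abs, ← map_smul_eq_mul p]
  exact absDomInf_le (apply_nonneg p) (smul_nonneg (abs_nonneg c) ha)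
    (smul_mem_Icc_abs_smul c hxa)

noncomputable def absDomSeminorm (hdominated : ∀ x : D, ∃ a, 0 ≤ a ∧ x ∈ Icc (-a) a) :
    Seminorm ℝ D :=
  Seminorm.ofSMulLE (absDomInf p)
    (le_antisymm (by simpa using absDomInf_le_self (apply_nonneg p) le_rfl)
      (absDomInf_nonneg (apply_nonneg p)))
    (absDomInf_add_le p hdominated)
    (fun c x => by simpa using absDomInf_smul_le p hdominated c x)

end OrderedModule

section Normed

variable {D : Type*} [NormedAddCommGroup D] [NormedSpace ℝ D]

lemma isNorm_norm_add_mul_seminorm (p : Seminorm ℝ D) {t : ℝ} (ht : 0 ≤ t) :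
    IsNorm fun x => ‖x‖ + t * p x where
  nonneg x := by positivity
  eq_zero_iff x := by
    refine ⟨fun h => norm_eq_zero.mp ?_, fun h => by simp [h]⟩
    linarith [norm_nonneg x, mul_nonneg ht (apply_nonneg p x)]
  smul_eq c x := by rw [norm_smul, map_smul_eq_mul, Real.norm_eq_abs]; ring
  triangle x y := by nlinarith [norm_add_le x y, map_add_le_add p x y]

variable [PartialOrder D] [IsOrderedAddMonoid D] [PosSMulMono ℝ D]

theorem exists_equivalent_norm_absDomInf_le (hdominated : ∀ x : D, ∃ a, 0 ≤ a ∧ x ∈ Icc (-a) a)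
    {C : ℝ} (hC : 0 < C) (hdom : ∀ x : D, absDomInf norm x ≤ C * ‖x‖) {K : ℝ} (hK : 1 < K) :
    ∃ ρ : D → ℝ, IsNorm ρ ∧
      (∃ c₁ c₂ : ℝ, 0 < c₁ ∧ 0 < c₂ ∧ ∀ x : D, ρ x ≤ c₁ * ‖x‖ ∧ ‖x‖ ≤ c₂ * ρ x) ∧
      ∀ x : D, absDomInf ρ x ≤ K * ρ x := by
  set ν := absDomSeminorm (normSeminorm ℝ D) hdominated
  have hν : ∀ x, ν x = absDomInf norm x := fun _ => rfl
  set t := (K - 1)⁻¹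
  have ht : 0 < t := inv_pos.mpr (sub_pos.mpr hK)
  have hKt : 1 + t = K * t := by
    have : (K - 1) * t = 1 := mul_inv_cancel₀ (sub_pos.mpr hK).ne'
    linarith
  have hρ := isNorm_norm_add_mul_seminorm ν ht.le
  refine ⟨_, hρ, ⟨1 + t * C, 1, by positivity, one_pos, fun x => ⟨?_, ?_⟩⟩, fun x => ?_⟩
  · nlinarith [hν x ▸ hdom x]
  · linarith [mul_nonneg ht.le (apply_nonneg ν x)]
  · have hρ_le : ∀ a : D, 0 ≤ a → ‖a‖ + t * ν a ≤ (1 + t) * ‖a‖ := fun a ha => by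
      rw [add_mul, one_mul, hν]
      gcongr
      exact absDomInf_le_self (fun b => norm_nonneg b) ha
    calc absDomInf (fun x => ‖x‖ + t * ν x) x ≤ (1 + t) * ν x :=
          absDomInf_le_mul (by positivity) (fun x => hρ.nonneg x) (hdominated x) hρ_le
      _ = K * (t * ν x) := by rw [hKt]; ring
      _ ≤ K * (‖x‖ + t * ν x) := by gcongr; linarith [norm_nonneg x]

end Normed

theorem exists_equivalent_almost_one_absolutely_dominating_norm_general
    {D : Type*} [NormedAddCommGroup D] [NormedSpace ℝ D]
    [PartialOrder D] [CovariantClass D D (· + ·) (· ≤ ·)]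
    (hsmul : ∀ (c : ℝ) (x : D), 0 ≤ c → 0 ≤ x → 0 ≤ c • x)
    (hgen : ∀ x : D, ∃ y z : D, 0 ≤ y ∧ 0 ≤ z ∧ x = y - z)
    (C : ℝ) (hC : 0 < C)
    (hdom : ∀ x : D,
      sInf {r : ℝ | ∃ a : D, 0 ≤ a ∧ -a ≤ x ∧ x ≤ a ∧ r = ‖a‖} ≤ C * ‖x‖)
    (ε : ℝ) (hε : 0 < ε) :
    ∃ ρ : D → ℝ, IsNorm ρ ∧
      (∃ c₁ c₂ : ℝ, 0 < c₁ ∧ 0 < c₂ ∧ ∀ x : D, ρ x ≤ c₁ * ‖x‖ ∧ ‖x‖ ≤ c₂ * ρ x) ∧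
      ∀ x : D,
        sInf {r : ℝ | ∃ a : D, 0 ≤ a ∧ -a ≤ x ∧ x ≤ a ∧ r = ρ a} ≤ (1 + ε) ^ 2 * ρ x := by
  have : IsOrderedAddMonoid D := { add_le_add_left := fun _ _ h c => by gcongr }
  have : PosSMulMono ℝ D := .of_smul_nonneg fun c hc x hx => hsmul c x hc hx
  have hdominated : ∀ x : D, ∃ a, 0 ≤ a ∧ x ∈ Icc (-a) a := fun x =>
    let ⟨_, _, hy, hz, hx⟩ := hgen x
    ⟨_, add_mem_Icc_of_eq_sub hy hz hx⟩
  exact exists_equivalent_norm_absDomInf_le hdominated hC hdom (by nlinarith)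

/-- If the norm of an ordered Banach space with closed generating cone is `C`-absolutely
dominating for some `C > 0`, then for every `ε > 0` there is an equivalent norm `ρ` that
is `(1+ε)²`-absolutely dominating. -/
theorem exists_equivalent_almost_one_absolutely_dominating_norm
    {D : Type*} [NormedAddCommGroup D] [NormedSpace ℝ D] [CompleteSpace D]
    [PartialOrder D] [CovariantClass D D (· + ·) (· ≤ ·)]
    (hsmul : ∀ (c : ℝ) (x : D), 0 ≤ c → 0 ≤ x → 0 ≤ c • x)
    (hclosed : IsClosed {x : D | 0 ≤ x})
    (hgen : ∀ x : D, ∃ y z : D, 0 ≤ y ∧ 0 ≤ z ∧ x = y - z)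
    (C : ℝ) (hC : 0 < C)
    (hdom : ∀ x : D,
      sInf {r : ℝ | ∃ a : D, 0 ≤ a ∧ -a ≤ x ∧ x ≤ a ∧ r = ‖a‖} ≤ C * ‖x‖)
    (ε : ℝ) (hε : 0 < ε) :
    ∃ ρ : D → ℝ, IsNorm ρ ∧
      (∃ c₁ c₂ : ℝ, 0 < c₁ ∧ 0 < c₂ ∧ ∀ x : D, ρ x ≤ c₁ * ‖x‖ ∧ ‖x‖ ≤ c₂ * ρ x) ∧
      ∀ x : D,
        sInf {r : ℝ | ∃ a : D, 0 ≤ a ∧ -a ≤ x ∧ x ≤ a ∧ r = ρ a} ≤ (1 + ε) ^ 2 * ρ x :=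
  exists_equivalent_almost_one_absolutely_dominating_norm_general hsmul hgen C hC hdom ε hε
end

section
/- Let D be a real Banach space equipped with a partial order making it an ordered vector space with closed generating positive cone D⁺, whose norm ‖·‖ is absolutely dominating (there exists C > 0 with C·‖x‖ ≥ 𝒩(x) for all x, where 𝒩(x) = inf { ‖a‖ : a ∈ D⁺, −a ≤ x ≤ a }). Then the following are equivalent: (a) there exists a norm ‖·‖₁ on D equivalent to ‖·‖ with ‖x‖₁ = inf { ‖a‖₁ : a ∈ D⁺, −a ≤ x ≤ a } for all x ∈ D; (b) there exists c > 0 such that 𝒩(x) ≥ c·‖x‖ for all x ∈ D; (c) there exists a monotone norm equivalent to ‖·‖ (a norm ν with ν(x) ≤ ν(y) whenever 0 ≤ x ≤ y); (d) the cone D⁺ is normal, i.e., there exists c > 0 such that 0 ≤ x ≤ y implies ‖x‖ ≤ c·‖y‖. -/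
section Regularize

variable {D : Type*} [AddCommGroup D] [PartialOrder D]

def IsGeneratingCone (D : Type*) [AddCommGroup D] [PartialOrder D] : Prop :=
  ∀ x : D, ∃ y z : D, 0 ≤ y ∧ 0 ≤ z ∧ x = y - z

/-- The paper's `𝒩` is `regularize (‖·‖)`, and condition (a) asks for a norm `ν` with
`regularize ν = ν`. -/
noncomputable def regularize (ν : D → ℝ) (x : D) : ℝ :=
  sInf {r : ℝ | ∃ a : D, 0 ≤ a ∧ -a ≤ x ∧ x ≤ a ∧ r = ν a}

variable {ν : D → ℝ} {x y a : D}

theorem regularize_le (hν : ∀ a, 0 ≤ ν a) (ha : 0 ≤ a) (hax : -a ≤ x) (hxa : x ≤ a) :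
    regularize ν x ≤ ν a :=
  csInf_le ⟨0, by rintro _ ⟨b, -, -, -, rfl⟩; exact hν b⟩ ⟨a, ha, hax, hxa, rfl⟩

variable [IsOrderedAddMonoid D]

theorem exists_neg_le_le_of_generating (hgen : IsGeneratingCone D) (x : D) :
    ∃ a : D, 0 ≤ a ∧ -a ≤ x ∧ x ≤ a := by
  obtain ⟨y, z, hy, hz, rfl⟩ := hgen x
  refine ⟨y + z, add_nonneg hy hz, ?_, ?_⟩
  · rw [neg_add, sub_eq_add_neg]
    exact add_le_add_left (neg_le_self hy) _
  · rw [sub_eq_add_neg]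
    exact add_le_add_right (neg_le_self hz) _

theorem le_regularize (hgen : IsGeneratingCone D) {m : ℝ}
    (h : ∀ a, 0 ≤ a → -a ≤ x → x ≤ a → m ≤ ν a) : m ≤ regularize ν x := by
  obtain ⟨a, ha, hax, hxa⟩ := exists_neg_le_le_of_generating hgen x
  refine le_csInf ⟨ν a, a, ha, hax, hxa, rfl⟩ ?_
  rintro _ ⟨b, hb, hbx, hxb, rfl⟩
  exact h b hb hbx hxb

theorem regularize_nonneg (hν : ∀ a, 0 ≤ ν a) (hgen : IsGeneratingCone D) (x : D) :
    0 ≤ regularize ν x :=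
  le_regularize hgen fun a _ _ _ ↦ hν a

theorem regularize_le_self (hν : ∀ a, 0 ≤ ν a) (ha : 0 ≤ a) : regularize ν a ≤ ν a :=
  regularize_le hν ha (neg_le_self ha) le_rfl

theorem regularize_le_regularize (hν : ∀ a, 0 ≤ ν a) (hgen : IsGeneratingCone D)
    (hax : -a ≤ x) (hxa : x ≤ a) :
    regularize ν x ≤ regularize ν a :=
  le_regularize hgen fun _ hb _ hab ↦
    regularize_le hν hb ((neg_le_neg hab).trans hax) (hxa.trans hab)

theorem regularize_mono (hν : ∀ a, 0 ≤ ν a) (hgen : IsGeneratingCone D) (hx : 0 ≤ x) (hxy : x ≤ y) :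
    regularize ν x ≤ regularize ν y :=
  regularize_le_regularize hν hgen ((neg_nonpos.2 (hx.trans hxy)).trans hx) hxy

theorem regularize_regularize (hν : ∀ a, 0 ≤ ν a) (hgen : IsGeneratingCone D) (x : D) :
    regularize (regularize ν) x = regularize ν x :=
  le_antisymm
    (le_regularize hgen fun _ ha hax hxa ↦
      (regularize_le (regularize_nonneg hν hgen) ha hax hxa).trans (regularize_le_self hν ha))
    (le_regularize hgen fun _ _ hax hxa ↦ regularize_le_regularize hν hgen hax hxa)

theorem regularize_neg (x : D) : regularize ν (-x) = regularize ν x := by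
  unfold regularize
  congr 1
  ext r
  refine exists_congr fun a ↦ ?_
  rw [neg_le_neg_iff, neg_le]
  tauto

variable [Module ℝ D] (p : Seminorm ℝ D)

theorem regularize_zero (hgen : IsGeneratingCone D) : regularize p 0 = 0 :=
  le_antisymm ((regularize_le_self (apply_nonneg p) le_rfl).trans_eq (map_zero p))
    (regularize_nonneg (apply_nonneg p) hgen 0)

theorem regularize_add_le (hgen : IsGeneratingCone D) (x y : D) :
    regularize p (x + y) ≤ regularize p x + regularize p y := by
  rw [← sub_le_iff_le_add]
  refine le_regularize hgen fun a ha hax hxa ↦ ?_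
  rw [sub_le_comm]
  refine le_regularize hgen fun b hb hby hyb ↦ ?_
  have hsum : regularize p (x + y) ≤ p (a + b) :=
    regularize_le (apply_nonneg p) (add_nonneg ha hb) (neg_add a b ▸ add_le_add hax hby)
      (add_le_add hxa hyb)
  linarith [map_add_le_add p a b]

variable [PosSMulMono ℝ D]

theorem regularize_smul_le (hgen : IsGeneratingCone D) {t : ℝ} (ht : 0 < t) (x : D) :
    regularize p (t • x) ≤ t * regularize p x := by
  rw [← inv_mul_le_iff₀ ht]
  refine le_regularize hgen fun a ha hax hxa ↦ ?_
  rw [inv_mul_le_iff₀ ht]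
  refine (regularize_le (apply_nonneg p) (smul_nonneg ht.le ha)
    (smul_neg t a ▸ smul_le_smul_of_nonneg_left hax ht.le)
    (smul_le_smul_of_nonneg_left hxa ht.le)).trans_eq ?_
  rw [map_smul_eq_mul, Real.norm_of_nonneg ht.le]

theorem regularize_smul_of_pos (hgen : IsGeneratingCone D) {t : ℝ} (ht : 0 < t) (x : D) :
    regularize p (t • x) = t * regularize p x := by
  refine le_antisymm (regularize_smul_le p hgen ht x) ?_
  have h := regularize_smul_le p hgen (inv_pos.2 ht) (t • x)
  rwa [inv_smul_smul₀ ht.ne', le_inv_mul_iff₀ ht] at h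

theorem regularize_smul (hgen : IsGeneratingCone D) (t : ℝ) (x : D) :
    regularize p (t • x) = |t| * regularize p x := by
  rcases lt_trichotomy t 0 with ht | rfl | ht
  · rw [abs_of_neg ht, ← regularize_neg, ← neg_smul,
      regularize_smul_of_pos p hgen (neg_pos.2 ht)]
  · rw [zero_smul, regularize_zero p hgen, abs_zero, zero_mul]
  · rw [abs_of_pos ht, regularize_smul_of_pos p hgen ht]

end Regularize

section NormedSpace

variable {D : Type*} [NormedAddCommGroup D] [PartialOrder D]

def IsEquivalentToNorm (ν : D → ℝ) : Prop :=
  ∃ c₁ c₂ : ℝ, 0 < c₁ ∧ 0 < c₂ ∧ ∀ x : D, ν x ≤ c₁ * ‖x‖ ∧ ‖x‖ ≤ c₂ * ν x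

variable (D) in
def IsNormalCone : Prop :=
  ∃ c : ℝ, 0 < c ∧ ∀ x y : D, 0 ≤ x → x ≤ y → ‖x‖ ≤ c * ‖y‖

theorem isNormalCone_of_monotone {ν : D → ℝ} (hequiv : IsEquivalentToNorm ν)
    (hmono : ∀ x y : D, 0 ≤ x → x ≤ y → ν x ≤ ν y) : IsNormalCone D := by
  obtain ⟨c₁, c₂, hc₁, hc₂, h⟩ := hequiv
  refine ⟨c₂ * c₁, by positivity, fun x y hx hxy ↦ ?_⟩
  calc ‖x‖ ≤ c₂ * ν x := (h x).2
    _ ≤ c₂ * ν y := by gcongr; exact hmono x y hx hxy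
    _ ≤ c₂ * (c₁ * ‖y‖) := by gcongr; exact (h y).1
    _ = c₂ * c₁ * ‖y‖ := (mul_assoc _ _ _).symm

theorem isEquivalentToNorm_regularize_norm
    (hdom : ∃ C : ℝ, 0 < C ∧ ∀ x : D, regularize (‖·‖) x ≤ C * ‖x‖)
    (hlow : ∃ c : ℝ, 0 < c ∧ ∀ x : D, c * ‖x‖ ≤ regularize (‖·‖) x) :
    IsEquivalentToNorm (regularize (‖·‖) : D → ℝ) := by
  obtain ⟨C, hC, hup⟩ := hdom
  obtain ⟨c, hc, hlow⟩ := hlow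
  exact ⟨C, c⁻¹, hC, inv_pos.2 hc, fun x ↦ ⟨hup x, (le_inv_mul_iff₀ hc).2 (hlow x)⟩⟩

variable [IsOrderedAddMonoid D]

theorem exists_mul_norm_le_regularize_norm (hgen : IsGeneratingCone D) {K : ℝ} (hK : 0 < K)
    (h : ∀ x a : D, 0 ≤ a → -a ≤ x → x ≤ a → ‖x‖ ≤ K * ‖a‖) :
    ∃ c : ℝ, 0 < c ∧ ∀ x : D, c * ‖x‖ ≤ regularize (‖·‖) x :=
  ⟨K⁻¹, inv_pos.2 hK, fun x ↦
    le_regularize hgen fun a ha hax hxa ↦ (inv_mul_le_iff₀ hK).2 (h x a ha hax hxa)⟩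

theorem exists_mul_norm_le_regularize_norm_of_regular (hgen : IsGeneratingCone D) {ν : D → ℝ}
    (hν : ∀ x, 0 ≤ ν x) (hequiv : IsEquivalentToNorm ν) (hreg : ∀ x, ν x = regularize ν x) :
    ∃ c : ℝ, 0 < c ∧ ∀ x : D, c * ‖x‖ ≤ regularize (‖·‖) x := by
  obtain ⟨c₁, c₂, hc₁, hc₂, h⟩ := hequiv
  refine exists_mul_norm_le_regularize_norm hgen (mul_pos hc₂ hc₁) fun x a ha hax hxa ↦ ?_
  calc ‖x‖ ≤ c₂ * ν x := (h x).2
    _ ≤ c₂ * ν a := by gcongr; exact (hreg x).trans_le (regularize_le hν ha hax hxa)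
    _ ≤ c₂ * (c₁ * ‖a‖) := by gcongr; exact (h a).1
    _ = c₂ * c₁ * ‖a‖ := (mul_assoc _ _ _).symm

variable [NormedSpace ℝ D]

theorem exists_mul_norm_le_regularize_norm_of_isNormalCone (hgen : IsGeneratingCone D)
    (hnormal : IsNormalCone D) : ∃ c : ℝ, 0 < c ∧ ∀ x : D, c * ‖x‖ ≤ regularize (‖·‖) x := by
  obtain ⟨c, hc, hnormal⟩ := hnormal
  refine exists_mul_norm_le_regularize_norm hgen (by positivity : 0 < 2 * c + 1)
    fun x a _ hax hxa ↦ ?_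
  have hlow : 0 ≤ x + a := by simpa using add_le_add_left hax a
  have hup : x + a ≤ (2 : ℝ) • a := two_smul ℝ a ▸ add_le_add_left hxa a
  calc ‖x‖ = ‖x + a - a‖ := by rw [add_sub_cancel_right]
    _ ≤ ‖x + a‖ + ‖a‖ := norm_sub_le _ _
    _ ≤ c * ‖(2 : ℝ) • a‖ + ‖a‖ := by gcongr; exact hnormal _ _ hlow hup
    _ = (2 * c + 1) * ‖a‖ := by rw [norm_smul, Real.norm_two]; ring

variable [PosSMulMono ℝ D]

theorem isNorm_regularize_norm (hgen : IsGeneratingCone D)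
    (hlow : ∃ c : ℝ, 0 < c ∧ ∀ x : D, c * ‖x‖ ≤ regularize (‖·‖) x) :
    IsNorm (regularize (‖·‖) : D → ℝ) := by
  obtain ⟨c, hc, hlow⟩ := hlow
  refine ⟨regularize_nonneg norm_nonneg hgen, fun x ↦ ⟨fun hx ↦ ?_, ?_⟩,
    regularize_smul (normSeminorm ℝ D) hgen, regularize_add_le (normSeminorm ℝ D) hgen⟩
  · have := hlow x
    rw [hx] at this
    exact norm_eq_zero.1 (le_antisymm (nonpos_of_mul_nonpos_right this hc) (norm_nonneg x))
  · rintro rfl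
    exact regularize_zero (normSeminorm ℝ D) hgen

end NormedSpace

theorem normality_equivalences_general
    {D : Type*} [NormedAddCommGroup D] [NormedSpace ℝ D]
    [PartialOrder D] [CovariantClass D D (· + ·) (· ≤ ·)]
    (hsmul : ∀ (c : ℝ) (x : D), 0 ≤ c → 0 ≤ x → 0 ≤ c • x)
    (hgen : ∀ x : D, ∃ y z : D, 0 ≤ y ∧ 0 ≤ z ∧ x = y - z)
    (hdom : ∃ C : ℝ, 0 < C ∧ ∀ x : D,
      sInf {r : ℝ | ∃ a : D, 0 ≤ a ∧ -a ≤ x ∧ x ≤ a ∧ r = ‖a‖} ≤ C * ‖x‖) :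
    ((∃ ν : D → ℝ, IsNorm ν ∧
        (∃ c₁ c₂ : ℝ, 0 < c₁ ∧ 0 < c₂ ∧ ∀ x : D, ν x ≤ c₁ * ‖x‖ ∧ ‖x‖ ≤ c₂ * ν x) ∧
        ∀ x : D, ν x = sInf {r : ℝ | ∃ a : D, 0 ≤ a ∧ -a ≤ x ∧ x ≤ a ∧ r = ν a}) ↔
      (∃ c : ℝ, 0 < c ∧ ∀ x : D,
        c * ‖x‖ ≤ sInf {r : ℝ | ∃ a : D, 0 ≤ a ∧ -a ≤ x ∧ x ≤ a ∧ r = ‖a‖})) ∧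
    ((∃ c : ℝ, 0 < c ∧ ∀ x : D,
        c * ‖x‖ ≤ sInf {r : ℝ | ∃ a : D, 0 ≤ a ∧ -a ≤ x ∧ x ≤ a ∧ r = ‖a‖}) ↔
      (∃ ν : D → ℝ, IsNorm ν ∧
        (∃ c₁ c₂ : ℝ, 0 < c₁ ∧ 0 < c₂ ∧ ∀ x : D, ν x ≤ c₁ * ‖x‖ ∧ ‖x‖ ≤ c₂ * ν x) ∧
        ∀ x y : D, 0 ≤ x → x ≤ y → ν x ≤ ν y)) ∧
    ((∃ ν : D → ℝ, IsNorm ν ∧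
        (∃ c₁ c₂ : ℝ, 0 < c₁ ∧ 0 < c₂ ∧ ∀ x : D, ν x ≤ c₁ * ‖x‖ ∧ ‖x‖ ≤ c₂ * ν x) ∧
        ∀ x y : D, 0 ≤ x → x ≤ y → ν x ≤ ν y) ↔
      (∃ c : ℝ, 0 < c ∧ ∀ x y : D, 0 ≤ x → x ≤ y → ‖x‖ ≤ c * ‖y‖)) := by
  have : IsOrderedAddMonoid D :=
    ⟨fun _ _ h c ↦ add_le_add_left h c, fun _ _ h c ↦ add_le_add_right h c⟩
  have : PosSMulMono ℝ D := .of_smul_nonneg fun c hc x hx ↦ hsmul c x hc hx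
  have regularize_norm_of_lower_bound
      (hlow : ∃ c : ℝ, 0 < c ∧ ∀ x : D, c * ‖x‖ ≤ regularize (‖·‖) x) :
      IsNorm (regularize (‖·‖) : D → ℝ) ∧ IsEquivalentToNorm (regularize (‖·‖) : D → ℝ) :=
    ⟨isNorm_regularize_norm hgen hlow, isEquivalentToNorm_regularize_norm hdom hlow⟩
  have b_to_c (hlow : ∃ c : ℝ, 0 < c ∧ ∀ x : D, c * ‖x‖ ≤ regularize (‖·‖) x) :
      ∃ ν : D → ℝ, IsNorm ν ∧ IsEquivalentToNorm ν ∧ ∀ x y : D, 0 ≤ x → x ≤ y → ν x ≤ ν y :=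
    ⟨_, (regularize_norm_of_lower_bound hlow).1, (regularize_norm_of_lower_bound hlow).2,
      fun _ _ ↦ regularize_mono norm_nonneg hgen⟩
  have c_to_d : (∃ ν : D → ℝ, IsNorm ν ∧ IsEquivalentToNorm ν ∧
      ∀ x y : D, 0 ≤ x → x ≤ y → ν x ≤ ν y) → IsNormalCone D :=
    fun ⟨_, _, hequiv, hmono⟩ ↦ isNormalCone_of_monotone hequiv hmono
  have d_to_b := exists_mul_norm_le_regularize_norm_of_isNormalCone hgen
  refine ⟨⟨fun ⟨_, hν, hequiv, hreg⟩ ↦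
      exists_mul_norm_le_regularize_norm_of_regular hgen hν.nonneg hequiv hreg,
    fun hlow ↦ ⟨_, (regularize_norm_of_lower_bound hlow).1,
      (regularize_norm_of_lower_bound hlow).2,
      fun x ↦ (regularize_regularize norm_nonneg hgen x).symm⟩⟩,
    ⟨b_to_c, fun hc ↦ d_to_b (c_to_d hc)⟩, ⟨c_to_d, fun hd ↦ b_to_c (d_to_b hd)⟩⟩

/-- For an ordered Banach space `D` with closed generating cone and absolutely
dominating norm, the following are equivalent:
(a) there is an equivalent norm `ν` with `ν x = inf {ν a : a ∈ D⁺, -a ≤ x ≤ a}`;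
(b) `𝒩(x) = inf {‖a‖ : a ∈ D⁺, -a ≤ x ≤ a}` dominates a multiple of the norm;
(c) there is an equivalent monotone norm;
(d) the cone is normal. -/
theorem normality_equivalences
    {D : Type*} [NormedAddCommGroup D] [NormedSpace ℝ D] [CompleteSpace D]
    [PartialOrder D] [CovariantClass D D (· + ·) (· ≤ ·)]
    (hsmul : ∀ (c : ℝ) (x : D), 0 ≤ c → 0 ≤ x → 0 ≤ c • x)
    (hclosed : IsClosed {x : D | 0 ≤ x})
    (hgen : ∀ x : D, ∃ y z : D, 0 ≤ y ∧ 0 ≤ z ∧ x = y - z)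
    (hdom : ∃ C : ℝ, 0 < C ∧ ∀ x : D,
      sInf {r : ℝ | ∃ a : D, 0 ≤ a ∧ -a ≤ x ∧ x ≤ a ∧ r = ‖a‖} ≤ C * ‖x‖) :
    ((∃ ν : D → ℝ, IsNorm ν ∧
        (∃ c₁ c₂ : ℝ, 0 < c₁ ∧ 0 < c₂ ∧ ∀ x : D, ν x ≤ c₁ * ‖x‖ ∧ ‖x‖ ≤ c₂ * ν x) ∧
        ∀ x : D, ν x = sInf {r : ℝ | ∃ a : D, 0 ≤ a ∧ -a ≤ x ∧ x ≤ a ∧ r = ν a}) ↔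
      (∃ c : ℝ, 0 < c ∧ ∀ x : D,
        c * ‖x‖ ≤ sInf {r : ℝ | ∃ a : D, 0 ≤ a ∧ -a ≤ x ∧ x ≤ a ∧ r = ‖a‖})) ∧
    ((∃ c : ℝ, 0 < c ∧ ∀ x : D,
        c * ‖x‖ ≤ sInf {r : ℝ | ∃ a : D, 0 ≤ a ∧ -a ≤ x ∧ x ≤ a ∧ r = ‖a‖}) ↔
      (∃ ν : D → ℝ, IsNorm ν ∧
        (∃ c₁ c₂ : ℝ, 0 < c₁ ∧ 0 < c₂ ∧ ∀ x : D, ν x ≤ c₁ * ‖x‖ ∧ ‖x‖ ≤ c₂ * ν x) ∧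
        ∀ x y : D, 0 ≤ x → x ≤ y → ν x ≤ ν y)) ∧
    ((∃ ν : D → ℝ, IsNorm ν ∧
        (∃ c₁ c₂ : ℝ, 0 < c₁ ∧ 0 < c₂ ∧ ∀ x : D, ν x ≤ c₁ * ‖x‖ ∧ ‖x‖ ≤ c₂ * ν x) ∧
        ∀ x y : D, 0 ≤ x → x ≤ y → ν x ≤ ν y) ↔
      (∃ c : ℝ, 0 < c ∧ ∀ x y : D, 0 ≤ x → x ≤ y → ‖x‖ ≤ c * ‖y‖)) :=
  normality_equivalences_general hsmul hgen hdom
end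

section
/- Let D be a real Banach space equipped with a partial order making it an ordered vector space with closed generating positive cone D⁺ = {x ∈ D : 0 ≤ x}. Let H be an Archimedean real ordered vector space and let T : D → H be a linear order preserving map (x ≤ y implies T x ≤ T y). Then the kernel of T is a closed linear subspace of D. -/
/-!
By Baire's theorem and the successive-approximation argument from the proof of the open mapping
theorem, a closed generating cone in a Banach space admits a constant `C` such that every `x`
satisfies `-y ≤ x ≤ y` for some `y` with `‖y‖ ≤ C * ‖x‖` (Andô). If `x` is the limit of kernel
elements `u n` with `‖x - u n‖ ≤ 2⁻ⁿ`, the vectors `n • (x - u n)` are therefore dominated by the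
terms of a convergent series of positive vectors, hence all by its sum `y`. Applying `T` gives
`-T y ≤ n • T x ≤ T y` for every `n`, and the Archimedean property forces `T x = 0`.
-/

open Filter Finset Set Topology

lemma eq_zero_of_forall_nsmul_mem_Icc {H : Type*} [AddCommGroup H] [PartialOrder H]
    [IsOrderedAddMonoid H] (harch : ∀ a b : H, (∀ n : ℕ, n • a ≤ b) → a ≤ 0) {a b : H}
    (h : ∀ n : ℕ, n • a ∈ Icc (-b) b) : a = 0 :=
  le_antisymm (harch a b fun n => (h n).2) <| neg_nonpos.1 <|
    harch (-a) b fun n => by rw [smul_neg]; exact neg_le.1 (h n).1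

lemma nonneg_of_neg_le_self {M : Type*} [AddCommGroup M] [PartialOrder M] [IsOrderedAddMonoid M]
    [Module ℝ M] [PosSMulMono ℝ M] {y : M} (h : -y ≤ y) : 0 ≤ y := by
  have h2 : 0 ≤ y + y := by simpa using add_le_add_right h y
  have hy : y = (1 / 2 : ℝ) • (y + y) := by
    rw [← two_smul ℝ, smul_smul]; norm_num
  rw [hy]
  exact smul_nonneg (by norm_num) h2

def dominatedBall (E : Type*) [NormedAddCommGroup E] [PartialOrder E] (r : ℝ) : Set E :=
  {x | ∃ y : E, ‖y‖ ≤ r ∧ x ∈ Icc (-y) y}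

section PartialOrder

variable {E : Type*} [NormedAddCommGroup E] [PartialOrder E]

lemma dominatedBall_mono {r s : ℝ} (h : r ≤ s) : dominatedBall E r ⊆ dominatedBall E s :=
  fun _ ⟨y, hy, hxy⟩ => ⟨y, hy.trans h, hxy⟩

lemma zero_mem_dominatedBall {r : ℝ} (hr : 0 ≤ r) : (0 : E) ∈ dominatedBall E r :=
  ⟨0, by simpa using hr, by simp⟩

variable [NormedSpace ℝ E] [PosSMulMono ℝ E]

lemma smul_mem_dominatedBall {c r : ℝ} {x : E} (hc : 0 ≤ c) (hx : x ∈ dominatedBall E r) :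
    c • x ∈ dominatedBall E (c * r) := by
  obtain ⟨y, hy, hxl, hxu⟩ := hx
  refine ⟨c • y, ?_, ?_, smul_le_smul_of_nonneg_left hxu hc⟩
  · rw [norm_smul, Real.norm_of_nonneg hc]
    exact mul_le_mul_of_nonneg_left hy hc
  · rw [← smul_neg]
    exact smul_le_smul_of_nonneg_left hxl hc

lemma smul_mem_closure_dominatedBall {c r : ℝ} {x : E} (hc : 0 ≤ c)
    (hx : x ∈ closure (dominatedBall E r)) : c • x ∈ closure (dominatedBall E (c * r)) :=
  map_mem_closure (continuous_const_smul c) hx fun _ => smul_mem_dominatedBall hc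

end PartialOrder

section OrderedGroup

variable {E : Type*} [NormedAddCommGroup E] [PartialOrder E] [IsOrderedAddMonoid E]

lemma self_mem_dominatedBall_norm {y : E} (hy : 0 ≤ y) : y ∈ dominatedBall E ‖y‖ :=
  ⟨y, le_rfl, neg_le_self hy, le_rfl⟩

lemma neg_mem_dominatedBall {r : ℝ} {x : E} (hx : x ∈ dominatedBall E r) :
    -x ∈ dominatedBall E r := by
  obtain ⟨y, hy, hxl, hxu⟩ := hx
  exact ⟨y, hy, neg_le_neg hxu, neg_le.1 hxl⟩

lemma add_mem_dominatedBall {r s : ℝ} {x x' : E} (hx : x ∈ dominatedBall E r)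
    (hx' : x' ∈ dominatedBall E s) : x + x' ∈ dominatedBall E (r + s) := by
  obtain ⟨y, hy, hxl, hxu⟩ := hx
  obtain ⟨y', hy', hxl', hxu'⟩ := hx'
  refine ⟨y + y', (norm_add_le y y').trans (add_le_add hy hy'), ?_, add_le_add hxu hxu'⟩
  rw [neg_add]
  exact add_le_add hxl hxl'

lemma iUnion_dominatedBall_eq_univ (hgen : ∀ x : E, ∃ y z : E, 0 ≤ y ∧ 0 ≤ z ∧ x = y - z) :
    ⋃ n : ℕ, dominatedBall E n = univ := by
  refine eq_univ_of_forall fun x => ?_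
  obtain ⟨y, z, hy, hz, rfl⟩ := hgen x
  have h := add_mem_dominatedBall (self_mem_dominatedBall_norm hy)
    (neg_mem_dominatedBall (self_mem_dominatedBall_norm hz))
  rw [← sub_eq_add_neg] at h
  exact mem_iUnion.2 ⟨_, dominatedBall_mono (Nat.le_ceil _) h⟩

lemma convex_dominatedBall [NormedSpace ℝ E] [PosSMulMono ℝ E] (r : ℝ) :
    Convex ℝ (dominatedBall E r) := by
  intro x₁ hx₁ x₂ hx₂ a b ha hb hab
  have h := add_mem_dominatedBall (smul_mem_dominatedBall ha hx₁) (smul_mem_dominatedBall hb hx₂)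
  rwa [← add_mul, hab, one_mul] at h

variable [CompleteSpace E]

lemma mem_dominatedBall_of_tendsto_sum [OrderClosedTopology E] {x : ℕ → E} {s : E} {ρ : ℕ → ℝ}
    {r : ℝ} (hx : Tendsto (fun n => ∑ i ∈ range n, x i) atTop (𝓝 s)) (hρ : HasSum ρ r)
    (h : ∀ n, x n ∈ dominatedBall E (ρ n)) : s ∈ dominatedBall E r := by
  choose y hyρ hy using h
  have hy_sum : Summable y := .of_norm_bounded hρ.summable hyρ
  have hlim := hy_sum.hasSum.tendsto_sum_nat
  refine ⟨∑' n, y n, tsum_of_norm_bounded hρ hyρ, ?_, ?_⟩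
  · refine le_of_tendsto_of_tendsto' hlim.neg hx fun n => ?_
    rw [← sum_neg_distrib]
    exact sum_le_sum fun i _ => (hy i).1
  · exact le_of_tendsto_of_tendsto' hx hlim fun n => sum_le_sum fun i _ => (hy i).2

lemma mem_dominatedBall_of_forall_mem_closure [OrderClosedTopology E] {C : ℝ} (hC : 0 ≤ C)
    (h : ∀ x : E, x ∈ closure (dominatedBall E (C * ‖x‖))) (x : E) :
    x ∈ dominatedBall E (2 * C * ‖x‖) := by
  have approx : ∀ z : E, ∃ a ∈ dominatedBall E (C * ‖z‖), ‖z - a‖ ≤ ‖z‖ / 2 := by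
    intro z
    rcases eq_or_ne z 0 with rfl | hz
    · exact ⟨0, zero_mem_dominatedBall (by simp), by simp⟩
    obtain ⟨a, ha, hza⟩ := Metric.mem_closure_iff.1 (h z) (‖z‖ / 2) (by positivity)
    exact ⟨a, ha, (dist_eq_norm z a ▸ hza).le⟩
  choose a ha hza using approx
  set r : ℕ → E := fun k => (fun z => z - a z)^[k] x
  have hr_succ : ∀ k, r (k + 1) = r k - a (r k) := fun k => Function.iterate_succ_apply' _ k x
  have hr_norm : ∀ k, ‖r k‖ ≤ (1 / 2) ^ k * ‖x‖ := by
    intro k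
    induction k with
    | zero => simp [r]
    | succ k ih =>
      rw [hr_succ, pow_succ]
      linarith [hza (r k)]
  have hr_sum : ∀ k, ∑ j ∈ range k, a (r j) = x - r k := by
    intro k
    induction k with
    | zero => simp [r]
    | succ k ih => rw [sum_range_succ, ih, hr_succ]; abel
  have hr_lim : Tendsto r atTop (𝓝 0) := squeeze_zero_norm hr_norm <| by
    simpa using (tendsto_pow_atTop_nhds_zero_of_lt_one (by norm_num)
      (by norm_num : (1 / 2 : ℝ) < 1)).mul_const ‖x‖
  refine mem_dominatedBall_of_tendsto_sum (x := fun k => a (r k))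
    (ρ := fun k => C * ‖x‖ * (1 / 2) ^ k) ?_ ?_ fun k => dominatedBall_mono ?_ (ha (r k))
  · simpa [hr_sum] using tendsto_const_nhds.sub hr_lim
  · have hgeom := hasSum_geometric_two.mul_left (C * ‖x‖)
    rwa [mul_comm (C * ‖x‖) 2, ← mul_assoc] at hgeom
  · rw [mul_assoc, mul_comm ‖x‖]
    exact mul_le_mul_of_nonneg_left (hr_norm k) hC

variable [NormedSpace ℝ E] [PosSMulMono ℝ E]

lemma exists_forall_mem_Icc_of_summable [OrderClosedTopology E] {x : ℕ → E} {ρ : ℕ → ℝ}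
    (hρ : Summable ρ) (h : ∀ n, x n ∈ dominatedBall E (ρ n)) :
    ∃ y : E, ∀ n, x n ∈ Icc (-y) y := by
  choose y hyρ hy using h
  have hy_sum : Summable y := .of_norm_bounded hρ hyρ
  have hle : ∀ n, y n ≤ ∑' n, y n := fun n =>
    hy_sum.le_tsum n fun j _ => nonneg_of_neg_le_self ((hy j).1.trans (hy j).2)
  exact ⟨∑' n, y n, fun n => ⟨(neg_le_neg (hle n)).trans (hy n).1, (hy n).2.trans (hle n)⟩⟩

lemma exists_zero_mem_interior_closure_dominatedBall
    (hgen : ∀ x : E, ∃ y z : E, 0 ≤ y ∧ 0 ≤ z ∧ x = y - z) :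
    ∃ N : ℕ, (0 : E) ∈ interior (closure (dominatedBall E N)) := by
  have hcover : ⋃ n : ℕ, closure (dominatedBall E n) = univ :=
    eq_univ_of_univ_subset <|
      iUnion_dominatedBall_eq_univ hgen ▸ iUnion_mono fun _ => subset_closure
  obtain ⟨N, x₀, hx₀⟩ := nonempty_interior_of_iUnion_of_closed (fun _ => isClosed_closure) hcover
  have hneg : -x₀ ∈ closure (dominatedBall E N) :=
    map_mem_closure continuous_neg (interior_subset hx₀) fun _ => neg_mem_dominatedBall
  refine ⟨N, ?_⟩
  simpa using (convex_dominatedBall (N : ℝ)).closure.combo_interior_self_mem_interior hx₀ hneg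
    (by norm_num : (0 : ℝ) < 1 / 2) (by norm_num : (0 : ℝ) ≤ 1 / 2) (by norm_num)

lemma exists_forall_mem_closure_dominatedBall
    (hgen : ∀ x : E, ∃ y z : E, 0 ≤ y ∧ 0 ≤ z ∧ x = y - z) :
    ∃ C : ℝ, 0 ≤ C ∧ ∀ x : E, x ∈ closure (dominatedBall E (C * ‖x‖)) := by
  obtain ⟨N, hN⟩ := exists_zero_mem_interior_closure_dominatedBall hgen
  obtain ⟨ε, hε, hball⟩ :=
    Metric.nhds_basis_closedBall.mem_iff.1 (mem_interior_iff_mem_nhds.1 hN)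
  refine ⟨N / ε, by positivity, fun x => ?_⟩
  rcases eq_or_ne x 0 with rfl | hx
  · exact subset_closure (zero_mem_dominatedBall (by simp))
  have hx' : 0 < ‖x‖ := norm_pos_iff.2 hx
  have hscaled : (ε / ‖x‖) • x ∈ closure (dominatedBall E N) := hball <| by
    rw [mem_closedBall_zero_iff, norm_smul, Real.norm_of_nonneg (by positivity),
      div_mul_cancel₀ _ hx'.ne']
  convert smul_mem_closure_dominatedBall (c := ‖x‖ / ε) (by positivity) hscaled using 3
  · ring
  · rw [smul_smul, div_mul_div_cancel₀ hε.ne', div_self hx'.ne', one_smul]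

lemma exists_forall_mem_dominatedBall [OrderClosedTopology E]
    (hgen : ∀ x : E, ∃ y z : E, 0 ≤ y ∧ 0 ≤ z ∧ x = y - z) :
    ∃ C : ℝ, 0 ≤ C ∧ ∀ x : E, x ∈ dominatedBall E (C * ‖x‖) := by
  obtain ⟨C, hC, h⟩ := exists_forall_mem_closure_dominatedBall hgen
  exact ⟨2 * C, by positivity, mem_dominatedBall_of_forall_mem_closure hC h⟩

end OrderedGroup

theorem ker_closed_of_order_preserving_general
    {D : Type*} [NormedAddCommGroup D] [NormedSpace ℝ D] [CompleteSpace D]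
    [PartialOrder D] [CovariantClass D D (· + ·) (· ≤ ·)]
    {H : Type*} [AddCommGroup H] [Module ℝ H] [PartialOrder H]
    [CovariantClass H H (· + ·) (· ≤ ·)]
    (hsmulD : ∀ (c : ℝ) (x : D), 0 ≤ c → 0 ≤ x → 0 ≤ c • x)
    (hclosed : IsClosed {x : D | 0 ≤ x})
    (hgen : ∀ x : D, ∃ y z : D, 0 ≤ y ∧ 0 ≤ z ∧ x = y - z)
    (harch : ∀ a b : H, (∀ n : ℕ, n • a ≤ b) → a ≤ 0)
    (T : D →ₗ[ℝ] H) (hmono : ∀ x y : D, x ≤ y → T x ≤ T y) :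
    IsClosed {x : D | T x = 0} := by
  have : IsOrderedAddMonoid D := { add_le_add_left := fun _ _ h c => add_le_add_left h c }
  have : IsOrderedAddMonoid H := { add_le_add_left := fun _ _ h c => add_le_add_left h c }
  have : PosSMulMono ℝ D := .of_smul_nonneg fun c hc x hx => hsmulD c x hc hx
  have : OrderClosedTopology D := ⟨isClosed_le_of_isClosed_nonneg hclosed⟩
  obtain ⟨C, hC, hdom⟩ := exists_forall_mem_dominatedBall hgen
  refine isClosed_of_closure_subset fun x hx => ?_
  obtain ⟨u, hu, hxu⟩ : ∃ u : ℕ → D, (∀ n, T (u n) = 0) ∧ ∀ n, ‖x - u n‖ ≤ (1 / 2) ^ n := by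
    choose u hu hxu using fun n : ℕ =>
      Metric.mem_closure_iff.1 hx ((1 / 2) ^ n) (by positivity)
    exact ⟨u, hu, fun n => (dist_eq_norm x (u n) ▸ hxu n).le⟩
  have hbound : ∀ n : ℕ, C * ‖(n : ℝ) • (x - u n)‖ ≤ C * (n ^ 1 * (1 / 2) ^ n) := fun n => by
    rw [norm_smul, Real.norm_natCast, pow_one]
    exact mul_le_mul_of_nonneg_left (mul_le_mul_of_nonneg_left (hxu n) n.cast_nonneg) hC
  obtain ⟨y, hy⟩ := exists_forall_mem_Icc_of_summable
    ((summable_pow_mul_geometric_of_norm_lt_one 1 (by norm_num : ‖(1 / 2 : ℝ)‖ < 1)).mul_left C)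
    fun n => dominatedBall_mono (hbound n) (hdom _)
  refine eq_zero_of_forall_nsmul_mem_Icc harch (b := T y) fun n => ?_
  have h := (Monotone.mapsTo_Icc (fun a b => hmono a b)) (hy n)
  rwa [map_neg, map_smul, map_sub, hu, sub_zero, Nat.cast_smul_eq_nsmul] at h

/-- The kernel of an order preserving linear map from an ordered Banach space with closed
generating cone into an Archimedean ordered vector space is closed. -/
theorem ker_closed_of_order_preserving
    {D : Type*} [NormedAddCommGroup D] [NormedSpace ℝ D] [CompleteSpace D]
    [PartialOrder D] [CovariantClass D D (· + ·) (· ≤ ·)]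
    {H : Type*} [AddCommGroup H] [Module ℝ H] [PartialOrder H]
    [CovariantClass H H (· + ·) (· ≤ ·)]
    (hsmulD : ∀ (c : ℝ) (x : D), 0 ≤ c → 0 ≤ x → 0 ≤ c • x)
    (hsmulH : ∀ (c : ℝ) (x : H), 0 ≤ c → 0 ≤ x → 0 ≤ c • x)
    (hclosed : IsClosed {x : D | 0 ≤ x})
    (hgen : ∀ x : D, ∃ y z : D, 0 ≤ y ∧ 0 ≤ z ∧ x = y - z)
    (harch : ∀ a b : H, (∀ n : ℕ, n • a ≤ b) → a ≤ 0)
    (T : D →ₗ[ℝ] H) (hmono : ∀ x y : D, x ≤ y → T x ≤ T y) :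
    IsClosed {x : D | T x = 0} :=
  ker_closed_of_order_preserving_general hsmulD hclosed hgen harch T hmono
end

section
/- Let G be a σ-compact locally compact (Hausdorff) topological group and let f : G → ℝ be continuous. Then there exists a continuous function w : G → [0, ∞) such that: (i) for every x ∈ G there exists c ≥ 0 with |f(x⁻¹·y)| ≤ c·w(y) for all y ∈ G (i.e., every left translate L_x f lies in the principal ideal of C(G) generated by w); and (ii) for every a ∈ G and every ε > 0 there exists a neighbourhood U of a such that for all x ∈ U and all y ∈ G, |f(x⁻¹·y) − f(a⁻¹·y)| ≤ ε·w(y) (i.e., x ↦ L_x f is continuous with respect to the w-weighted uniform norm). -/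
/-!
Fix compact exhaustions `(K n)` and a bound `b n` of `|f (x⁻¹ * y)|` on `K n × K n`. A partition
of unity gives a continuous `w ≥ 1` with `w y ≥ n * |b n|` whenever `n` is the first index with
`y ∈ K n`, so for `x` in a fixed compact set and `y` far out, `|f (x⁻¹ * y)| ≤ b n ≤ w y / n`.
Thus every translate is `o(w)` at infinity, locally uniformly in `x`: off a large compact set
both `L_x f` and `L_a f` are small relative to `w`, and on it `L_x f → L_a f` uniformly as `x → a`.
-/

open Filter Set Topology

theorem exists_continuous_forall_le_of_locally_bddAbove {X : Type*} [TopologicalSpace X]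
    [NormalSpace X] [ParacompactSpace X] {h : X → ℝ} (hh : ∀ x, ∃ c, ∀ᶠ y in 𝓝 x, h y ≤ c) :
    ∃ w : C(X, ℝ), ∀ x, h x ≤ w x :=
  exists_continuous_forall_mem_convex_of_local_const (t := fun x => Ici (h x))
    (fun _ => convex_Ici _) hh

theorem CompactExhaustion.exists_continuous_forall_le_comp_find {X : Type*} [TopologicalSpace X]
    [NormalSpace X] [ParacompactSpace X] (K : CompactExhaustion X) (g : ℕ → ℝ) :
    ∃ w : C(X, ℝ), ∀ x, g (K.find x) ≤ w x := by
  -- `partialSups g ∘ K.find` is locally bounded since `K.find ≤ K.find x + 1` near `x`.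
  obtain ⟨w, hw⟩ := exists_continuous_forall_le_of_locally_bddAbove
    (h := fun x => partialSups g (K.find x)) fun x => by
      refine ⟨partialSups g (K.find x + 1), ?_⟩
      filter_upwards [mem_interior_iff_mem_nhds.1 (K.subset_interior_succ _ (K.mem_find x))]
        with y hy
      exact partialSups_monotone g (K.mem_iff_find_le.1 hy)
  exact ⟨w, fun x => (le_partialSups g (K.find x)).trans (hw x)⟩

theorem exists_continuous_weight_dominating_cocompact {X Y : Type*} [TopologicalSpace X]
    [TopologicalSpace Y] [WeaklyLocallyCompactSpace X] [SigmaCompactSpace X] [T2Space Y]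
    [WeaklyLocallyCompactSpace Y] [SigmaCompactSpace Y] {F : X → Y → ℝ}
    (hF : Continuous (Function.uncurry F)) :
    ∃ w : C(Y, ℝ), (∀ y, 1 ≤ w y) ∧
      ∀ C, IsCompact C → ∀ ε > 0, ∀ᶠ y in cocompact Y, ∀ x ∈ C, |F x y| ≤ ε * w y := by
  let KX := CompactExhaustion.choice X
  let KY := CompactExhaustion.choice Y
  have hbound : ∀ n, ∃ b, ∀ x ∈ KX n, ∀ y ∈ KY n, |F x y| ≤ b := fun n => by
    obtain ⟨b, hb⟩ :=
      ((KX.isCompact n).prod (KY.isCompact n)).exists_bound_of_continuousOn hF.continuousOn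
    exact ⟨b, fun x hx y hy => hb (x, y) ⟨hx, hy⟩⟩
  choose b hb using hbound
  obtain ⟨w, hw⟩ := KY.exists_continuous_forall_le_comp_find fun n => n * |b n| + 1
  refine ⟨w, fun y => (le_add_of_nonneg_left (by positivity)).trans (hw y), ?_⟩
  intro C hC ε hε
  obtain ⟨m, hm⟩ := KX.exists_superset_of_isCompact hC
  obtain ⟨N, hN⟩ := exists_nat_ge ε⁻¹
  filter_upwards [(KY.isCompact (max m N)).compl_mem_cocompact] with y hy x hx
  set n := KY.find y
  have hn : max m N < n := not_le.1 fun h => hy (KY.mem_iff_find_le.2 h)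
  have hεn : 1 ≤ ε * n := by
    rw [← inv_le_iff_one_le_mul₀' hε]
    exact hN.trans (by exact_mod_cast (le_max_right m N).trans hn.le)
  calc |F x y| ≤ |b n| := (hb n x (KX.subset (by omega) (hm hx)) y (KY.mem_find y)).trans
        (le_abs_self _)
    _ ≤ ε * n * |b n| := le_mul_of_one_le_left (abs_nonneg _) hεn
    _ ≤ ε * (n * |b n| + 1) := by rw [mul_add, mul_assoc]; linarith
    _ ≤ ε * w y := mul_le_mul_of_nonneg_left (hw y) hε.le

theorem exists_abs_le_mul_of_eventually_abs_le {Y : Type*} [TopologicalSpace Y] {h w : Y → ℝ}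
    (hh : Continuous h) (hw : ∀ y, 1 ≤ w y) (hhw : ∀ᶠ y in cocompact Y, |h y| ≤ w y) :
    ∃ c, 0 ≤ c ∧ ∀ y, |h y| ≤ c * w y := by
  obtain ⟨L, hL, hLh⟩ := hasBasis_cocompact.eventually_iff.1 hhw
  obtain ⟨B, hB⟩ := hL.exists_bound_of_continuousOn hh.continuousOn
  refine ⟨max B 1, zero_le_one.trans (le_max_right _ _), fun y => ?_⟩
  by_cases hy : y ∈ L
  · calc |h y| ≤ max B 1 := (hB y hy).trans (le_max_left _ _)
      _ ≤ max B 1 * w y := le_mul_of_one_le_right (zero_le_one.trans (le_max_right _ _)) (hw y)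
  · calc |h y| ≤ 1 * w y := (one_mul (w y)).symm ▸ hLh hy
      _ ≤ max B 1 * w y :=
        mul_le_mul_of_nonneg_right (le_max_right _ _) (zero_le_one.trans (hw y))

theorem eventually_forall_abs_sub_le_mul {X Y : Type*} [TopologicalSpace X] [TopologicalSpace Y]
    [WeaklyLocallyCompactSpace X] {F : X → Y → ℝ} (hF : Continuous (Function.uncurry F))
    {w : Y → ℝ} (hw : ∀ y, 1 ≤ w y)
    (hdom : ∀ C, IsCompact C → ∀ ε > 0, ∀ᶠ y in cocompact Y, ∀ x ∈ C, |F x y| ≤ ε * w y)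
    (a : X) {ε : ℝ} (hε : 0 < ε) : ∀ᶠ x in 𝓝 a, ∀ y, |F x y - F a y| ≤ ε * w y := by
  obtain ⟨V, hVc, hVa⟩ := exists_compact_mem_nhds a
  obtain ⟨L, hL, hLdom⟩ := hasBasis_cocompact.eventually_iff.1 (hdom V hVc (ε / 2) (half_pos hε))
  have hnear : ∀ᶠ x in 𝓝 a, ∀ y ∈ L, |F x y - F a y| < ε :=
    hL.eventually_forall_of_forall_eventually fun y _ =>
      ContinuousAt.eventually_lt (by fun_prop) continuousAt_const (by simpa using hε)
  filter_upwards [hnear, hVa] with x hxL hxV y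
  by_cases hy : y ∈ L
  · exact (hxL y hy).le.trans (le_mul_of_one_le_right hε.le (hw y))
  · calc |F x y - F a y| ≤ |F x y| + |F a y| := abs_sub _ _
      _ ≤ ε / 2 * w y + ε / 2 * w y :=
        add_le_add (hLdom hy x hxV) (hLdom hy a (mem_of_mem_nhds hVa))
      _ = ε * w y := by ring

/-- For a σ-compact locally compact group `G` and a continuous `f : G → ℝ` there is a
continuous weight `w ≥ 0` such that every left translate `L_x f : y ↦ f (x⁻¹ * y)` lies
in the principal ideal of `C(G)` generated by `w`, and `x ↦ L_x f` is continuous with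
respect to the `w`-weighted uniform norm. -/
theorem left_translates_in_principal_ideal
    {G : Type*} [Group G] [TopologicalSpace G] [IsTopologicalGroup G]
    [T2Space G] [LocallyCompactSpace G] [SigmaCompactSpace G]
    (f : G → ℝ) (hf : Continuous f) :
    ∃ w : G → ℝ, Continuous w ∧ (∀ y, 0 ≤ w y) ∧
      (∀ x : G, ∃ c : ℝ, 0 ≤ c ∧ ∀ y : G, |f (x⁻¹ * y)| ≤ c * w y) ∧
      (∀ a : G, ∀ ε : ℝ, 0 < ε → ∃ U ∈ nhds a,
        ∀ x ∈ U, ∀ y : G, |f (x⁻¹ * y) - f (a⁻¹ * y)| ≤ ε * w y) := by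
  have hF : Continuous (Function.uncurry fun x y : G => f (x⁻¹ * y)) := by fun_prop
  obtain ⟨w, hw, hdom⟩ := exists_continuous_weight_dominating_cocompact hF
  refine ⟨w, w.continuous, fun y => zero_le_one.trans (hw y), fun x => ?_, fun a ε hε => ?_⟩
  · refine exists_abs_le_mul_of_eventually_abs_le (by fun_prop) hw ?_
    filter_upwards [hdom {x} isCompact_singleton 1 one_pos] with y hy
    simpa using hy x rfl
  · exact (eventually_forall_abs_sub_le_mul hF hw hdom a hε).exists_mem
end
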